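/- arXiv:0911.5019 — 4 statements merged into one kernel-verified Lean document; each statement's English description precedes it below -/
import Mathlib

section
/- For a positive integer m and positive integer n, let A_m(n) be the set of partitions of n into distinct nonnegative parts with smallest part even such that every even part is a multiple of 2m, and let B_m(n) be the set of partitions of n into distinct odd parts with consecutive differences at most 2m (including the gap to 0). With weights ω_1(λ) = (-1)^{l-1} a^{ℓ_o(λ)} for λ ∈ A_m(n) with l parts and ℓ_o(λ) odd parts, and ω_2(μ) = (-a)^{ℓ(μ)} for μ ∈ B_m(n), we have ∑_{λ ∈ A_m(n)} ω_1(λ) = ∑_{μ ∈ B_m(n)} ω_2(μ) as polynomials in a. -/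
/-- The list of parts of a finset of naturals in decreasing order. -/
def descList (S : Finset ℕ) : List ℕ := (S.sort (· ≤ ·)).reverse

open scoped Classical in
/-- `Aset m n` : partitions of `n` into distinct nonnegative parts (so `0` may be a part)
with smallest part even, in which every even part is a multiple of `2m`. -/
noncomputable def Aset (m n : ℕ) : Finset (Finset ℕ) :=
  (Finset.range (n + 1)).powerset.filter
    (fun S => S.sum id = n ∧ (∃ a ∈ S, Even a ∧ ∀ x ∈ S, a ≤ x) ∧
      ∀ x ∈ S, Even x → 2 * m ∣ x)

open scoped Classical in
/-- `Bset m n` : partitions of `n` into distinct odd parts with consecutive differences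
at most `2m` (including the gap from the smallest part to `0`). -/
noncomputable def Bset (m n : ℕ) : Finset (Finset ℕ) :=
  (Finset.range (n + 1)).powerset.filter
    (fun S => S.sum id = n ∧ (∀ x ∈ S, Odd x) ∧
      ∀ i < S.card, (descList S).getD i 0 - (descList S).getD (i + 1) 0 ≤ 2 * m)

/-!
Deleting the part `0` matches the partitions in `Aset m n` that contain it with all partitions
of `n` into distinct positive parts whose even parts are multiples of `2m`, weighted by
`(-1)^ℓ a^ℓ_o`; the partitions in `Aset m n` without `0` are those among them with even smallest
part, weighted by `-(-1)^ℓ a^ℓ_o`. So the left side is the signed sum over such partitions with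
odd smallest part (`oddMinSet`), which contains `Bset m n` as the partitions with no even part
and no gap larger than `2m` between consecutive odd parts (or from the smallest one to `0`).

The remaining partitions cancel under a sign-reversing involution `toggle` that preserves the
sum and the number of odd parts. Let `z` be the smallest odd part whose gap to the preceding odd
part `y` (or to `0`) exceeds `2m`, write `z = b + 2md` with `y < b ≤ y + 2m`, and let `e` be the
smallest even part. If `e > 2md`, or there is no even part, split `z` into `b` and `2md`;
otherwise merge `e` into `y` (into the largest odd part if there is no such `z`), which makes
`y + e` the new smallest wide-gap part. `TogglePair` describes one orbit.
-/

namespace PartitionInvolution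

open Finset

noncomputable section

/-- `0` when `O` has no element below `x`: the gap below the smallest odd part is measured
from `0`. -/
def prev (O : Finset ℕ) (x : ℕ) : ℕ := (O.filter (· < x)).sup id

section Prev

variable {O : Finset ℕ} {x y t : ℕ}

lemma le_prev (ht : t ∈ O) (htx : t < x) : t ≤ prev O x :=
  le_sup (f := id) (mem_filter.2 ⟨ht, htx⟩)

lemma prev_le (h : ∀ t ∈ O, t < x → t ≤ y) : prev O x ≤ y :=
  Finset.sup_le fun t ht => h t (mem_filter.1 ht).1 (mem_filter.1 ht).2

lemma prev_eq (hy : y ∈ O) (hyx : y < x) (h : ∀ t ∈ O, t < x → t ≤ y) : prev O x = y :=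
  le_antisymm (prev_le h) (le_prev hy hyx)

lemma prev_eq_zero (h : ∀ t ∈ O, x ≤ t) : prev O x = 0 :=
  Nat.eq_zero_of_le_zero (prev_le fun t ht htx => absurd (h t ht) (not_le.2 htx))

lemma prev_mem_of_ne_zero (h : prev O x ≠ 0) : prev O x ∈ O ∧ prev O x < x := by
  have hne : (O.filter (· < x)).Nonempty :=
    nonempty_iff_ne_empty.2 fun he => h (by rw [prev, he, sup_empty]; rfl)
  obtain ⟨t, ht, hteq⟩ := exists_mem_eq_sup _ hne id
  rw [prev, hteq]
  exact mem_filter.1 ht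

lemma prev_eq_zero_or_mem : prev O x = 0 ∨ (prev O x ∈ O ∧ prev O x < x) := by
  by_cases h : prev O x = 0
  · exact Or.inl h
  · exact Or.inr (prev_mem_of_ne_zero h)

lemma prev_lt (hx : 0 < x) : prev O x < x :=
  prev_eq_zero_or_mem.elim (fun h => h ▸ hx) And.right

lemma prev_insert_of_le {a : ℕ} (h : x ≤ a) : prev (insert a O) x = prev O x := by
  rw [prev, filter_insert, if_neg (not_lt.2 h), prev]

lemma prev_erase_of_le {a : ℕ} (h : x ≤ a) : prev (O.erase a) x = prev O x := by
  rw [prev, filter_erase, erase_eq_of_notMem, prev]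
  exact fun ha => (not_lt.2 h) (mem_filter.1 ha).2

end Prev

def oddParts (S : Finset ℕ) : Finset ℕ := S.filter Odd

def evenParts (S : Finset ℕ) : Finset ℕ := S.filter (¬ Odd ·)

section Parts

variable {S : Finset ℕ} {a x : ℕ}

@[simp] lemma mem_oddParts : x ∈ oddParts S ↔ x ∈ S ∧ Odd x := mem_filter

@[simp] lemma mem_evenParts : x ∈ evenParts S ↔ x ∈ S ∧ ¬ Odd x := mem_filter

lemma oddParts_insert_of_odd (ha : Odd a) : oddParts (insert a S) = insert a (oddParts S) := by
  rw [oddParts, filter_insert, if_pos ha]; rfl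

lemma oddParts_insert_of_not_odd (ha : ¬ Odd a) : oddParts (insert a S) = oddParts S := by
  rw [oddParts, filter_insert, if_neg ha]; rfl

lemma evenParts_insert_of_odd (ha : Odd a) : evenParts (insert a S) = evenParts S := by
  rw [evenParts, filter_insert, if_neg (not_not.2 ha)]; rfl

lemma evenParts_insert_of_not_odd (ha : ¬ Odd a) :
    evenParts (insert a S) = insert a (evenParts S) := by
  rw [evenParts, filter_insert, if_pos ha]; rfl

lemma oddParts_erase : oddParts (S.erase a) = (oddParts S).erase a := filter_erase _ _ _

lemma oddParts_eq_self (h : ∀ x ∈ S, Odd x) : oddParts S = S :=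
  filter_true_of_mem h

end Parts

lemma length_descList (S : Finset ℕ) : (descList S).length = S.card := by
  simp [descList]

@[simp] lemma mem_descList {S : Finset ℕ} {x : ℕ} : x ∈ descList S ↔ x ∈ S := by
  simp [descList]

lemma sortedGT_descList (S : Finset ℕ) : (descList S).SortedGT := (sortedLT_sort S).reverse

lemma getD_succ_descList {S : Finset ℕ} {i : ℕ} (hi : i < (descList S).length) :
    (descList S).getD (i + 1) 0 = prev S (descList S)[i] := by
  have hl := sortedGT_descList S
  rcases Nat.lt_or_ge (i + 1) (descList S).length with hi' | hi'
  · rw [List.getD_eq_getElem _ _ hi']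
    refine (prev_eq (mem_descList.1 (List.getElem_mem _))
      (hl.getElem_lt_getElem_iff.2 (Nat.lt_succ_self i)) fun t ht hti => ?_).symm
    obtain ⟨j, hj, rfl⟩ := List.mem_iff_getElem.1 (mem_descList.2 ht)
    exact hl.getElem_le_getElem_iff.2 (hl.getElem_lt_getElem_iff.1 hti)
  · rw [List.getD_eq_default _ _ hi']
    refine (prev_eq_zero fun t ht => ?_).symm
    obtain ⟨j, hj, rfl⟩ := List.mem_iff_getElem.1 (mem_descList.2 ht)
    exact hl.getElem_le_getElem_iff.2 (by omega)

lemma forall_gap_descList_iff {S : Finset ℕ} {k : ℕ} :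
    (∀ i < S.card, (descList S).getD i 0 - (descList S).getD (i + 1) 0 ≤ k) ↔
      ∀ x ∈ S, x - prev S x ≤ k := by
  simp_rw [← mem_descList (S := S), List.forall_mem_iff_getElem, ← length_descList S]
  refine forall_congr' fun i => forall_congr' fun hi => ?_
  rw [List.getD_eq_getElem _ _ hi, getD_succ_descList hi]

def wideGaps (m : ℕ) (S : Finset ℕ) : Finset ℕ :=
  (oddParts S).filter fun x => 2 * m < x - prev (oddParts S) x

def HasEvenMin (S : Finset ℕ) : Prop := ∃ a ∈ S, Even a ∧ ∀ x ∈ S, a ≤ x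

def Admissible (m : ℕ) (S : Finset ℕ) : Prop :=
  0 ∉ S ∧ ∀ x ∈ S, ¬ Odd x → 2 * m ∣ x

def Toggleable (m : ℕ) (S : Finset ℕ) : Prop :=
  Admissible m S ∧ ¬ HasEvenMin S ∧ ((evenParts S).Nonempty ∨ (wideGaps m S).Nonempty)

/- `minEven`, `firstWideGap` and `gapBase` return `0` for "no such part", which is never a
genuine value on admissible partitions. -/

def minEven (S : Finset ℕ) : ℕ := sInf (evenParts S : Set ℕ)

def firstWideGap (m : ℕ) (S : Finset ℕ) : ℕ := sInf (wideGaps m S : Set ℕ)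

def gapBase (m : ℕ) (S : Finset ℕ) : ℕ := prev (oddParts S) (firstWideGap m S)

def mergeTarget (m : ℕ) (S : Finset ℕ) : ℕ :=
  if firstWideGap m S = 0 then (oddParts S).sup id else gapBase m S

def gapSteps (m : ℕ) (S : Finset ℕ) : ℕ := (firstWideGap m S - gapBase m S - 1) / (2 * m)

def Mergeable (m : ℕ) (S : Finset ℕ) : Prop :=
  minEven S ≠ 0 ∧
    (firstWideGap m S = 0 ∨ (gapBase m S ≠ 0 ∧ minEven S ≤ 2 * m * gapSteps m S))

open scoped Classical in
def toggle (m : ℕ) (S : Finset ℕ) : Finset ℕ :=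
  if Mergeable m S then
    insert (mergeTarget m S + minEven S) ((S.erase (mergeTarget m S)).erase (minEven S))
  else
    insert (firstWideGap m S - 2 * m * gapSteps m S)
      (insert (2 * m * gapSteps m S) (S.erase (firstWideGap m S)))

lemma sInf_finset_eq {s : Finset ℕ} {a : ℕ} (ha : a ∈ s) (h : ∀ x ∈ s, a ≤ x) :
    sInf (s : Set ℕ) = a :=
  IsLeast.csInf_eq ⟨ha, h⟩

lemma sInf_finset_mem {s : Finset ℕ} (h : sInf (s : Set ℕ) ≠ 0) :
    sInf (s : Set ℕ) ∈ s := by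
  rcases s.eq_empty_or_nonempty with rfl | hs
  · simp at h
  · exact Nat.sInf_mem (coe_nonempty.2 hs)

lemma not_hasEvenMin_of_odd_min {S : Finset ℕ} {a : ℕ} (ha : a ∈ S) (hodd : Odd a)
    (hmin : ∀ x ∈ S, a ≤ x) : ¬ HasEvenMin S := by
  rintro ⟨e, he, heven, hemin⟩
  rw [le_antisymm (hemin a ha) (hmin e he)] at heven
  exact Nat.not_even_iff_odd.2 hodd heven

/-- The two members `R ∪ {b + 2md}` (`merged`) and `R ∪ {b, 2md}` (`split`) of an orbit of
`toggle`. Here `b + 2md` is the smallest odd part of `merged` whose gap to the previous odd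
part `y` (or to `0`) exceeds `2m`, and `2md` is smaller than every even part of `R`. -/
structure TogglePair (m : ℕ) where
  R : Finset ℕ
  b : ℕ
  y : ℕ
  d : ℕ
  pos_m : 0 < m
  one_le_d : 1 ≤ d
  odd_b : Odd b
  y_lt_b : y < b
  b_le : b ≤ y + 2 * m
  y_spec : y = 0 ∨ (y ∈ R ∧ Odd y)
  merged_notMem : b + 2 * m * d ∉ R
  le_y_of_odd : ∀ x ∈ R, Odd x → x < b + 2 * m * d → x ≤ y
  gap_le_of_odd : ∀ x ∈ R, Odd x → x < b + 2 * m * d → x - prev (oddParts R) x ≤ 2 * m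
  dvd_of_even : ∀ x ∈ R, ¬ Odd x → 2 * m ∣ x
  lt_of_even : ∀ x ∈ R, ¬ Odd x → 2 * m * d < x

namespace TogglePair

variable {m : ℕ} (c : TogglePair m)

def g : ℕ := 2 * m * c.d

def z : ℕ := c.b + c.g

def merged : Finset ℕ := insert c.z c.R

def split : Finset ℕ := insert c.b (insert c.g c.R)

lemma g_eq : c.g = 2 * m * c.d := rfl

lemma z_eq : c.z = c.b + c.g := rfl

lemma two_mul_le_g : 2 * m ≤ c.g := Nat.le_mul_of_pos_right _ c.one_le_d

lemma b_pos : 0 < c.b := c.odd_b.pos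

lemma not_odd_g : ¬ Odd c.g := Nat.not_odd_iff_even.2 ⟨m * c.d, by rw [g_eq]; ring⟩

lemma odd_z : Odd c.z := c.odd_b.add_even (Nat.not_odd_iff_even.1 c.not_odd_g)

lemma b_lt_z : c.b < c.z := by have := c.two_mul_le_g; have := c.pos_m; rw [z_eq]; omega

lemma y_lt_z : c.y < c.z := c.y_lt_b.trans c.b_lt_z

lemma z_notMem : c.z ∉ c.R := c.merged_notMem

lemma g_notMem : c.g ∉ c.R := fun h => lt_irrefl _ (c.lt_of_even _ h c.not_odd_g)

lemma b_notMem : c.b ∉ c.R := fun h => by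
  have := c.le_y_of_odd _ h c.odd_b c.b_lt_z; have := c.y_lt_b; omega

lemma zero_notMem : 0 ∉ c.R := fun h => by
  have := c.lt_of_even _ h (by decide); omega

lemma b_notMem_insert_g : c.b ∉ insert c.g c.R := by
  rw [mem_insert, not_or]
  exact ⟨fun h => c.not_odd_g (h ▸ c.odd_b), c.b_notMem⟩

lemma oddParts_merged : oddParts c.merged = insert c.z (oddParts c.R) :=
  oddParts_insert_of_odd c.odd_z

lemma evenParts_merged : evenParts c.merged = evenParts c.R :=
  evenParts_insert_of_odd c.odd_z

lemma oddParts_split : oddParts c.split = insert c.b (oddParts c.R) := by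
  rw [split, oddParts_insert_of_odd c.odd_b, oddParts_insert_of_not_odd c.not_odd_g]

lemma evenParts_split : evenParts c.split = insert c.g (evenParts c.R) := by
  rw [split, evenParts_insert_of_odd c.odd_b, evenParts_insert_of_not_odd c.not_odd_g]

lemma le_y_of_mem_oddParts {x : ℕ} (hx : x ∈ oddParts c.R) (hxz : x < c.z) : x ≤ c.y :=
  c.le_y_of_odd x (mem_oddParts.1 hx).1 (mem_oddParts.1 hx).2 hxz

lemma le_y_or_z_lt {x : ℕ} (hx : x ∈ oddParts c.R) : x ≤ c.y ∨ c.z < x := by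
  rcases lt_trichotomy x c.z with h | rfl | h
  · exact Or.inl (c.le_y_of_mem_oddParts hx h)
  · exact absurd (mem_oddParts.1 hx).1 c.z_notMem
  · exact Or.inr h

lemma prev_oddParts_R {x : ℕ} (hx : c.y < x) (hxz : x ≤ c.z) : prev (oddParts c.R) x = c.y := by
  rcases c.y_spec with h0 | ⟨hyR, hyodd⟩
  · rw [h0]
    refine prev_eq_zero fun t ht => not_lt.1 fun htx => ?_
    have := c.le_y_of_mem_oddParts ht (by omega)
    have := (mem_oddParts.1 ht).2.pos
    omega
  · exact prev_eq (mem_oddParts.2 ⟨hyR, hyodd⟩) hx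
      fun t ht htx => c.le_y_of_mem_oddParts ht (by omega)

lemma prev_z_merged : prev (oddParts c.merged) c.z = c.y := by
  rw [oddParts_merged, prev_insert_of_le le_rfl, c.prev_oddParts_R c.y_lt_z le_rfl]

lemma prev_b_split : prev (oddParts c.split) c.b = c.y := by
  rw [oddParts_split, prev_insert_of_le le_rfl, c.prev_oddParts_R c.y_lt_b c.b_lt_z.le]

lemma notMem_wideGaps_merged {x : ℕ} (hx : x ∈ oddParts c.R) (hxz : x < c.z) :
    x ∉ wideGaps m c.merged := by
  have hxy := c.le_y_of_mem_oddParts hx hxz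
  rw [wideGaps, mem_filter, oddParts_merged, prev_insert_of_le (by omega)]
  have := c.gap_le_of_odd x (mem_oddParts.1 hx).1 (mem_oddParts.1 hx).2 hxz
  omega

lemma notMem_wideGaps_split {x : ℕ} (hx : x ∈ oddParts c.R) (hxz : x < c.z) :
    x ∉ wideGaps m c.split := by
  have hxy := c.le_y_of_mem_oddParts hx hxz
  have := c.y_lt_b
  rw [wideGaps, mem_filter, oddParts_split, prev_insert_of_le (by omega)]
  have := c.gap_le_of_odd x (mem_oddParts.1 hx).1 (mem_oddParts.1 hx).2 hxz
  omega

lemma z_mem_wideGaps_merged : c.z ∈ wideGaps m c.merged := by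
  rw [wideGaps, mem_filter, prev_z_merged, oddParts_merged]
  have := c.two_mul_le_g; have := c.y_lt_b
  exact ⟨mem_insert_self _ _, by rw [z_eq]; omega⟩

lemma firstWideGap_merged : firstWideGap m c.merged = c.z := by
  refine sInf_finset_eq c.z_mem_wideGaps_merged fun v hv => not_lt.1 fun hvz => ?_
  have hvO := (mem_filter.1 hv).1
  rw [oddParts_merged, mem_insert] at hvO
  rcases hvO with rfl | hvR
  · exact lt_irrefl _ hvz
  · exact c.notMem_wideGaps_merged hvR hvz hv

lemma gapBase_merged : gapBase m c.merged = c.y := by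
  rw [gapBase, firstWideGap_merged, prev_z_merged]

lemma gapSteps_merged : gapSteps m c.merged = c.d := by
  have h2m : 0 < 2 * m := by have := c.pos_m; omega
  have hsplit : c.z - c.y - 1 = (c.b - c.y - 1) + c.d * (2 * m) := by
    have := c.y_lt_b; rw [z_eq, g_eq]; rw [mul_comm c.d]; omega
  rw [gapSteps, firstWideGap_merged, gapBase_merged, hsplit, Nat.add_mul_div_right _ _ h2m,
    Nat.div_eq_of_lt (by have := c.b_le; omega), zero_add]

lemma not_mergeable_merged : ¬ Mergeable m c.merged := by
  rintro ⟨he, hcase⟩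
  rw [firstWideGap_merged, gapSteps_merged] at hcase
  have hmem : minEven c.merged ∈ evenParts c.R := evenParts_merged c ▸ sInf_finset_mem he
  have := c.lt_of_even _ (mem_evenParts.1 hmem).1 (mem_evenParts.1 hmem).2
  have := c.y_lt_z
  omega

lemma toggle_merged : toggle m c.merged = c.split := by
  rw [toggle, if_neg c.not_mergeable_merged, firstWideGap_merged, gapSteps_merged, ← g_eq,
    merged, erase_insert c.z_notMem, z_eq, Nat.add_sub_cancel]
  rfl

lemma minEven_split : minEven c.split = c.g := by
  rw [minEven, evenParts_split]
  refine sInf_finset_eq (mem_insert_self _ _) fun x hx => ?_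
  rcases mem_insert.1 hx with rfl | hx
  · exact le_rfl
  · exact (c.lt_of_even x (mem_evenParts.1 hx).1 (mem_evenParts.1 hx).2).le

lemma mem_oddParts_and_z_lt_of_mem_wideGaps_split {v : ℕ} (hv : v ∈ wideGaps m c.split) :
    v ∈ oddParts c.R ∧ c.z < v := by
  have hvO := (mem_filter.1 hv).1
  rw [oddParts_split, mem_insert] at hvO
  rcases hvO with rfl | hvR
  · have := (mem_filter.1 hv).2
    rw [prev_b_split] at this
    have := c.b_le
    omega
  · refine ⟨hvR, (c.le_y_or_z_lt hvR).resolve_left fun hvy => ?_⟩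
    exact c.notMem_wideGaps_split hvR (by have := c.y_lt_z; omega) hv

lemma firstWideGap_split_of_no_odd_above (h : ∀ x ∈ oddParts c.R, x ≤ c.y) :
    firstWideGap m c.split = 0 ∧ (oddParts c.split).sup id = c.b := by
  refine ⟨?_, ?_⟩
  · have hempty : wideGaps m c.split = ∅ := eq_empty_of_forall_notMem fun v hv => by
      obtain ⟨hvR, hzv⟩ := c.mem_oddParts_and_z_lt_of_mem_wideGaps_split hv
      have := h v hvR; have := c.y_lt_z; omega
    rw [firstWideGap, hempty, coe_empty, Nat.sInf_empty]
  · refine le_antisymm (Finset.sup_le fun x hx => ?_) (le_sup (f := id) ?_)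
    · rw [oddParts_split, mem_insert] at hx
      rcases hx with rfl | hx
      · exact le_rfl
      · have := h x hx; have := c.y_lt_b; exact (by simp only [id]; omega)
    · rw [oddParts_split]; exact mem_insert_self _ _

lemma firstWideGap_split_of_odd_above {x₀ : ℕ} (hx₀ : x₀ ∈ oddParts c.R)
    (hzx₀ : c.z < x₀) (hmin : ∀ t ∈ oddParts c.R, c.z < t → x₀ ≤ t) :
    firstWideGap m c.split = x₀ ∧ gapBase m c.split = c.b := by
  have hprev : prev (oddParts c.split) x₀ = c.b := by
    refine prev_eq (by rw [oddParts_split]; exact mem_insert_self _ _) (c.b_lt_z.trans hzx₀)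
      fun t ht htx => ?_
    rw [oddParts_split, mem_insert] at ht
    rcases ht with rfl | ht
    · exact le_rfl
    · rcases c.le_y_or_z_lt ht with h | h
      · have := c.y_lt_b; omega
      · have := hmin t ht h; omega
  have hwide : x₀ ∈ wideGaps m c.split := by
    rw [wideGaps, mem_filter, hprev, oddParts_split]
    have := c.two_mul_le_g
    exact ⟨mem_insert_of_mem hx₀, by rw [z_eq] at hzx₀; omega⟩
  have hfirst : firstWideGap m c.split = x₀ := sInf_finset_eq hwide fun v hv =>
    hmin v (c.mem_oddParts_and_z_lt_of_mem_wideGaps_split hv).1 (c.mem_oddParts_and_z_lt_of_mem_wideGaps_split hv).2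
  exact ⟨hfirst, by rw [gapBase, hfirst, hprev]⟩

lemma mergeable_split : Mergeable m c.split ∧ mergeTarget m c.split = c.b := by
  have hg : minEven c.split ≠ 0 := by
    rw [minEven_split]; have := c.two_mul_le_g; have := c.pos_m; omega
  by_cases habove : ∃ x ∈ oddParts c.R, c.z < x
  · have hne : ((oddParts c.R).filter (c.z < ·)).Nonempty := by
      obtain ⟨x, hx, hzx⟩ := habove; exact ⟨x, mem_filter.2 ⟨hx, hzx⟩⟩
    obtain ⟨x₀, hx₀, hmin⟩ := exists_min_image _ id hne
    obtain ⟨hx₀, hzx₀⟩ := mem_filter.1 hx₀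
    obtain ⟨hfirst, hbase⟩ := c.firstWideGap_split_of_odd_above hx₀ hzx₀
      fun t ht hzt => hmin t (mem_filter.2 ⟨ht, hzt⟩)
    have hsteps : c.d ≤ gapSteps m c.split := by
      rw [gapSteps, hfirst, hbase, Nat.le_div_iff_mul_le (by have := c.pos_m; omega)]
      rw [z_eq, g_eq, mul_comm] at hzx₀
      omega
    refine ⟨⟨hg, Or.inr ⟨by rw [hbase]; exact c.b_pos.ne', ?_⟩⟩, ?_⟩
    · rw [minEven_split, g_eq]; exact Nat.mul_le_mul_left _ hsteps
    · rw [mergeTarget, if_neg (by omega), hbase]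
  · push Not at habove
    obtain ⟨hfirst, hmax⟩ := c.firstWideGap_split_of_no_odd_above fun x hx =>
      (c.le_y_or_z_lt hx).resolve_right (not_lt.2 (habove x hx))
    exact ⟨⟨hg, Or.inl hfirst⟩, by rw [mergeTarget, if_pos hfirst, hmax]⟩

lemma toggle_split : toggle m c.split = c.merged := by
  obtain ⟨hmerge, htarget⟩ := c.mergeable_split
  rw [toggle, if_pos hmerge, htarget, minEven_split, split, erase_insert c.b_notMem_insert_g,
    erase_insert c.g_notMem]
  rfl

lemma card_merged : c.merged.card = c.R.card + 1 := card_insert_of_notMem c.z_notMem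

lemma card_split : c.split.card = c.R.card + 2 := by
  rw [split, card_insert_of_notMem c.b_notMem_insert_g, card_insert_of_notMem c.g_notMem]

lemma card_oddParts_merged : (oddParts c.merged).card = (oddParts c.R).card + 1 := by
  rw [oddParts_merged, card_insert_of_notMem fun h => c.z_notMem (mem_oddParts.1 h).1]

lemma card_oddParts_split : (oddParts c.split).card = (oddParts c.R).card + 1 := by
  rw [oddParts_split, card_insert_of_notMem fun h => c.b_notMem (mem_oddParts.1 h).1]

lemma sum_split : c.split.sum id = c.merged.sum id := by
  rw [split, merged, sum_insert c.b_notMem_insert_g, sum_insert c.g_notMem,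
    sum_insert c.z_notMem, z_eq]
  simp only [id]
  ring

lemma add_two_mul_le_of_even {x : ℕ} (hx : x ∈ c.R) (hodd : ¬ Odd x) : c.g + 2 * m ≤ x := by
  obtain ⟨k, rfl⟩ := c.dvd_of_even x hx hodd
  have hdk : c.d < k := lt_of_mul_lt_mul_left (c.lt_of_even _ hx hodd) (Nat.zero_le _)
  calc c.g + 2 * m = 2 * m * (c.d + 1) := by rw [g_eq]; ring
    _ ≤ 2 * m * k := Nat.mul_le_mul_left _ hdk

lemma b_lt_two_mul (h0 : c.y = 0) : c.b < 2 * m := by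
  have := c.b_le
  have : c.b ≠ 2 * m := fun h => Nat.not_odd_iff_even.2 ⟨m, by ring⟩ (h ▸ c.odd_b)
  omega

lemma z_lt_of_odd (h0 : c.y = 0) {x : ℕ} (hx : x ∈ c.R) (hodd : Odd x) : c.z < x :=
  (c.le_y_or_z_lt (mem_oddParts.2 ⟨hx, hodd⟩)).resolve_left fun h => by
    have := hodd.pos; omega

lemma exists_odd_min_R (hyR : c.y ∈ c.R) (hyodd : Odd c.y) :
    ∃ a ∈ c.R, Odd a ∧ a ≤ 2 * m ∧ a ≤ c.y ∧ ∀ x ∈ c.R, Odd x → a ≤ x := by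
  obtain ⟨a, ha, hmin⟩ :=
    exists_min_image (oddParts c.R) id ⟨c.y, mem_oddParts.2 ⟨hyR, hyodd⟩⟩
  obtain ⟨haR, haodd⟩ := mem_oddParts.1 ha
  have hay : a ≤ c.y := hmin _ (mem_oddParts.2 ⟨hyR, hyodd⟩)
  have hgap := c.gap_le_of_odd a haR haodd (hay.trans_lt c.y_lt_z)
  rw [prev_eq_zero (x := a) fun t ht => hmin t ht] at hgap
  exact ⟨a, haR, haodd, by omega, hay, fun x hx hodd => hmin x (mem_oddParts.2 ⟨hx, hodd⟩)⟩

lemma not_hasEvenMin_merged : ¬ HasEvenMin c.merged := by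
  rcases c.y_spec with h0 | ⟨hyR, hyodd⟩
  · refine not_hasEvenMin_of_odd_min (mem_insert_self _ _) c.odd_z fun x hx => ?_
    rcases mem_insert.1 hx with rfl | hxR
    · exact le_rfl
    · by_cases hodd : Odd x
      · exact (c.z_lt_of_odd h0 hxR hodd).le
      · have := c.add_two_mul_le_of_even hxR hodd; have := c.b_lt_two_mul h0
        rw [z_eq]; omega
  · obtain ⟨a, haR, haodd, ha2m, hay, hamin⟩ := c.exists_odd_min_R hyR hyodd
    refine not_hasEvenMin_of_odd_min (mem_insert_of_mem haR) haodd fun x hx => ?_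
    rcases mem_insert.1 hx with rfl | hxR
    · have := c.y_lt_z; omega
    · by_cases hodd : Odd x
      · exact hamin x hxR hodd
      · have := c.lt_of_even x hxR hodd; have := c.two_mul_le_g; rw [g_eq] at this; omega

lemma not_hasEvenMin_split : ¬ HasEvenMin c.split := by
  rcases c.y_spec with h0 | ⟨hyR, hyodd⟩
  · refine not_hasEvenMin_of_odd_min (mem_insert_self _ _) c.odd_b fun x hx => ?_
    have := c.b_lt_two_mul h0; have := c.two_mul_le_g
    rcases mem_insert.1 hx with rfl | hx
    · exact le_rfl
    rcases mem_insert.1 hx with rfl | hxR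
    · omega
    · by_cases hodd : Odd x
      · exact (c.b_lt_z.trans (c.z_lt_of_odd h0 hxR hodd)).le
      · have := c.add_two_mul_le_of_even hxR hodd; omega
  · obtain ⟨a, haR, haodd, ha2m, hay, hamin⟩ := c.exists_odd_min_R hyR hyodd
    refine not_hasEvenMin_of_odd_min (mem_insert_of_mem (mem_insert_of_mem haR)) haodd
      fun x hx => ?_
    have := c.two_mul_le_g
    rcases mem_insert.1 hx with rfl | hx
    · have := c.y_lt_b; omega
    rcases mem_insert.1 hx with rfl | hxR
    · omega
    · by_cases hodd : Odd x
      · exact hamin x hxR hodd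
      · have := c.lt_of_even x hxR hodd; rw [g_eq] at *; omega

lemma toggleable_merged : Toggleable m c.merged := by
  refine ⟨⟨fun h => ?_, fun x hx hodd => ?_⟩, c.not_hasEvenMin_merged,
    Or.inr ⟨c.z, c.z_mem_wideGaps_merged⟩⟩
  · rcases mem_insert.1 h with h | h
    · have := c.y_lt_z; omega
    · exact c.zero_notMem h
  · rcases mem_insert.1 hx with rfl | hxR
    · exact absurd c.odd_z hodd
    · exact c.dvd_of_even x hxR hodd

lemma toggleable_split : Toggleable m c.split := by
  refine ⟨⟨fun h => ?_, fun x hx hodd => ?_⟩, c.not_hasEvenMin_split,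
    Or.inl ⟨c.g, by rw [evenParts_split]; exact mem_insert_self _ _⟩⟩
  · have := c.b_pos; have := c.two_mul_le_g; have := c.pos_m
    rcases mem_insert.1 h with h | h
    · omega
    rcases mem_insert.1 h with h | h
    · omega
    · exact c.zero_notMem h
  · rcases mem_insert.1 hx with rfl | hx
    · exact absurd c.odd_b hodd
    rcases mem_insert.1 hx with rfl | hxR
    · exact ⟨c.d, rfl⟩
    · exact c.dvd_of_even x hxR hodd

end TogglePair

section Construction

variable {m : ℕ} {S : Finset ℕ}

lemma pos_of_mem_wideGaps {v : ℕ} (hv : v ∈ wideGaps m S) : 0 < v := by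
  have := (mem_filter.1 hv).2; omega

lemma firstWideGap_eq_zero_iff : firstWideGap m S = 0 ↔ wideGaps m S = ∅ := by
  refine ⟨fun h => eq_empty_of_forall_notMem fun v hv => ?_, fun h => ?_⟩
  · have := Nat.sInf_mem (s := (wideGaps m S : Set ℕ)) ⟨v, hv⟩
    rw [← firstWideGap, h] at this
    exact lt_irrefl _ (pos_of_mem_wideGaps this)
  · rw [firstWideGap, h, coe_empty, Nat.sInf_empty]

lemma minEven_mem (h0 : 0 ∉ S) {x : ℕ} (hx : x ∈ evenParts S) :
    minEven S ∈ evenParts S ∧ minEven S ≠ 0 := by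
  have hmem : minEven S ∈ evenParts S := Nat.sInf_mem ⟨x, hx⟩
  exact ⟨hmem, fun h => h0 (h ▸ (mem_evenParts.1 hmem).1)⟩

lemma exists_odd_min_of_not_hasEvenMin (hS : ¬ HasEvenMin S) (hne : S.Nonempty) :
    ∃ a ∈ S, Odd a ∧ ∀ x ∈ S, a ≤ x := by
  obtain ⟨a, ha, hmin⟩ := exists_min_image S id hne
  exact ⟨a, ha, Nat.not_even_iff_odd.1 fun heven => hS ⟨a, ha, heven, hmin⟩, hmin⟩

lemma gap_steps_bounds {y z s : ℕ} (hm : 0 < m) (hgap : 2 * m < z - y)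
    (hs : s = (z - y - 1) / (2 * m)) :
    1 ≤ s ∧ y < z - 2 * m * s ∧ z - 2 * m * s ≤ y + 2 * m ∧ 2 * m * s < z := by
  have h2m : 0 < 2 * m := by omega
  have := Nat.div_add_mod (z - y - 1) (2 * m)
  have := Nat.mod_lt (z - y - 1) h2m
  have hs1 : 1 ≤ s := by rw [hs, Nat.le_div_iff_mul_le h2m]; omega
  rw [← hs] at *
  omega

lemma exists_eq_merged (hm : 0 < m) (hS : Admissible m S) {z : ℕ} (hz : z ∈ wideGaps m S)
    (hzmin : ∀ v ∈ wideGaps m S, z ≤ v)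
    (heven : ∀ x ∈ evenParts S, 2 * m * ((z - prev (oddParts S) z - 1) / (2 * m)) < x) :
    ∃ c : TogglePair m, S = c.merged := by
  set y := prev (oddParts S) z
  set s := (z - y - 1) / (2 * m) with hs
  obtain ⟨hzO, hgap⟩ := mem_filter.1 hz
  obtain ⟨hzS, hzodd⟩ := mem_oddParts.1 hzO
  obtain ⟨hs1, hyb, hb, hgz⟩ := gap_steps_bounds hm hgap hs
  have hbz : z - 2 * m * s + 2 * m * s = z := Nat.sub_add_cancel hgz.le
  have hoddb : Odd (z - 2 * m * s) := Nat.Odd.sub_even hgz.le hzodd ⟨m * s, by ring⟩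
  have hle_y : ∀ x ∈ S.erase z, Odd x → x < z → x ≤ y := fun x hx hodd hxz =>
    le_prev (mem_oddParts.2 ⟨mem_of_mem_erase hx, hodd⟩) hxz
  refine ⟨⟨S.erase z, z - 2 * m * s, y, s, hm, hs1, hoddb, hyb, hb, ?_, ?_, ?_, ?_,
    fun x hx => hS.2 x (mem_of_mem_erase hx),
    fun x hx hodd => heven x (mem_evenParts.2 ⟨mem_of_mem_erase hx, hodd⟩)⟩, ?_⟩
  · rcases prev_eq_zero_or_mem (O := oddParts S) (x := z) with h | ⟨hyO, hyz⟩
    · exact Or.inl h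
    · exact Or.inr ⟨mem_erase.2 ⟨hyz.ne, (mem_oddParts.1 hyO).1⟩, (mem_oddParts.1 hyO).2⟩
  · rw [hbz]; exact notMem_erase _ _
  · rw [hbz]; exact hle_y
  · intro x hx hodd hxz
    rw [hbz] at hxz
    have hxO : x ∈ oddParts S := mem_oddParts.2 ⟨mem_of_mem_erase hx, hodd⟩
    rw [oddParts_erase, prev_erase_of_le hxz.le]
    by_contra hwide
    exact absurd (hzmin x (mem_filter.2 ⟨hxO, by omega⟩)) (not_le.2 hxz)
  · change S = insert (z - 2 * m * s + 2 * m * s) (S.erase z)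
    rw [hbz, insert_erase hzS]

lemma exists_eq_split (hm : 0 < m) (hS : Admissible m S) {e w : ℕ}
    (he : e ∈ evenParts S) (hemin : ∀ x ∈ evenParts S, e ≤ x)
    (hw : w ∈ oddParts S) (hw_narrow : w ∉ wideGaps m S)
    (hw_above : ∀ x ∈ oddParts S, w < x → w + e < x)
    (hw_below : ∀ x ∈ oddParts S, x < w → x ∉ wideGaps m S) :
    ∃ c : TogglePair m, S = c.split := by
  obtain ⟨heS, heodd⟩ := mem_evenParts.1 he
  obtain ⟨hwS, hwodd⟩ := mem_oddParts.1 hw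
  obtain ⟨k, rfl⟩ := hS.2 _ heS heodd
  have hk1 : 1 ≤ k := Nat.one_le_iff_ne_zero.2 fun h0 => hS.1 (by rwa [h0, mul_zero] at heS)
  have he0 : 0 < 2 * m * k := by positivity
  set R := (S.erase w).erase (2 * m * k)
  have hRS : ∀ x ∈ R, x ∈ S := fun x hx => mem_of_mem_erase (mem_of_mem_erase hx)
  have hlt_w : ∀ x ∈ R, Odd x → x < w + 2 * m * k → x < w := fun x hx hodd hxz =>
    (lt_or_gt_of_ne (mem_erase.1 (mem_of_mem_erase hx)).1).resolve_right fun h => by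
      have := hw_above x (mem_oddParts.2 ⟨hRS x hx, hodd⟩) h; omega
  refine ⟨⟨R, w, prev (oddParts S) w, k, hm, hk1, hwodd, prev_lt hwodd.pos, ?_, ?_, ?_,
    fun x hx hodd hxz => le_prev (mem_oddParts.2 ⟨hRS x hx, hodd⟩) (hlt_w x hx hodd hxz), ?_,
    fun x hx => hS.2 x (hRS x hx), fun x hx hodd => ?_⟩, ?_⟩
  · exact not_lt.1 fun h => hw_narrow (mem_filter.2 ⟨hw, by omega⟩)
  · rcases prev_eq_zero_or_mem (O := oddParts S) (x := w) with h | ⟨hyO, hyw⟩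
    · exact Or.inl h
    · obtain ⟨hyS, hyodd⟩ := mem_oddParts.1 hyO
      exact Or.inr
        ⟨mem_erase.2 ⟨fun h => heodd (h ▸ hyodd), mem_erase.2 ⟨hyw.ne, hyS⟩⟩, hyodd⟩
  · intro h
    have := hw_above _ (mem_oddParts.2 ⟨hRS _ h,
      hwodd.add_even (Nat.not_odd_iff_even.1 heodd)⟩) (by omega)
    omega
  · intro x hx hodd hxz
    have hxw := hlt_w x hx hodd hxz
    have hxO : x ∈ oddParts S := mem_oddParts.2 ⟨hRS x hx, hodd⟩
    rw [oddParts_erase, oddParts_erase, erase_eq_of_notMem fun h => heodd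
      (mem_oddParts.1 (mem_of_mem_erase h)).2, prev_erase_of_le hxw.le]
    exact not_lt.1 fun h => hw_below x hxO hxw (mem_filter.2 ⟨hxO, by omega⟩)
  · have := hemin x (mem_evenParts.2 ⟨hRS x hx, hodd⟩)
    have := (mem_erase.1 hx).1
    omega
  · have hwe : 2 * m * k ≠ w := fun h => heodd (h ▸ hwodd)
    change S = insert w (insert (2 * m * k) ((S.erase w).erase (2 * m * k)))
    rw [insert_erase (mem_erase.2 ⟨hwe, heS⟩), insert_erase hwS]

lemma exists_eq_merged_of_not_mergeable (hm : 0 < m) (hS : Toggleable m S)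
    (h : ¬ Mergeable m S) : ∃ c : TogglePair m, S = c.merged := by
  obtain ⟨hadm, hnotEven, hne⟩ := hS
  have hwide : (wideGaps m S).Nonempty := by
    by_contra hw
    obtain ⟨x, hx⟩ := hne.resolve_right hw
    exact h ⟨(minEven_mem hadm.1 hx).2,
      Or.inl (firstWideGap_eq_zero_iff.2 (not_nonempty_iff_eq_empty.1 hw))⟩
  have hz : firstWideGap m S ∈ wideGaps m S := Nat.sInf_mem (coe_nonempty.2 hwide)
  refine exists_eq_merged hm hadm hz (fun v hv => Nat.sInf_le hv) fun x hx => ?_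
  change 2 * m * gapSteps m S < x
  have hsteps := (gap_steps_bounds (s := gapSteps m S) hm (mem_filter.1 hz).2 rfl).2.2.2
  have hmerge : ¬ (gapBase m S ≠ 0 ∧ minEven S ≤ 2 * m * gapSteps m S) := fun h' =>
    h ⟨(minEven_mem hadm.1 hx).2, Or.inr h'⟩
  by_cases hy0 : gapBase m S = 0
  · -- the first wide gap is then the smallest part
    obtain ⟨a, haS, haodd, hamin⟩ :=
      exists_odd_min_of_not_hasEvenMin hnotEven ⟨x, (mem_evenParts.1 hx).1⟩
    have hza : firstWideGap m S ≤ a := not_lt.1 fun hlt => by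
      have := le_prev (mem_oddParts.2 ⟨haS, haodd⟩) hlt
      rw [← gapBase, hy0] at this
      exact absurd haodd.pos (by omega)
    have := hamin x (mem_evenParts.1 hx).1
    omega
  · have : minEven S ≤ x := Nat.sInf_le hx
    omega

lemma exists_eq_split_of_mergeable (hm : 0 < m) (hS : Toggleable m S) (h : Mergeable m S) :
    ∃ c : TogglePair m, S = c.split := by
  obtain ⟨hadm, hnotEven, -⟩ := hS
  obtain ⟨he0, hcase⟩ := h
  have he : minEven S ∈ evenParts S := sInf_finset_mem he0
  have hemin : ∀ x ∈ evenParts S, minEven S ≤ x := fun x hx => Nat.sInf_le hx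
  by_cases hz0 : firstWideGap m S = 0
  · have hempty := firstWideGap_eq_zero_iff.1 hz0
    obtain ⟨a, haS, haodd, -⟩ :=
      exists_odd_min_of_not_hasEvenMin hnotEven ⟨_, (mem_evenParts.1 he).1⟩
    obtain ⟨w, hw, hwmax⟩ :=
      exists_max_image (oddParts S) id ⟨a, mem_oddParts.2 ⟨haS, haodd⟩⟩
    exact exists_eq_split hm hadm he hemin hw (by rw [hempty]; exact notMem_empty _)
      (fun x hx hwx => absurd (hwmax x hx) (not_le.2 hwx))
      (fun x _ _ => by rw [hempty]; exact notMem_empty _)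
  · obtain ⟨hy0, hele⟩ := hcase.resolve_left hz0
    have hz : firstWideGap m S ∈ wideGaps m S := sInf_finset_mem hz0
    have hzmin : ∀ v ∈ wideGaps m S, firstWideGap m S ≤ v := fun v hv => Nat.sInf_le hv
    obtain ⟨hyO, hyz⟩ := prev_mem_of_ne_zero hy0
    have hbase : prev (oddParts S) (firstWideGap m S) + 2 * m * gapSteps m S <
        firstWideGap m S := by
      have := (gap_steps_bounds (s := gapSteps m S) hm (mem_filter.1 hz).2 rfl).2
      generalize 2 * m * gapSteps m S = t at this ⊢
      omega
    refine exists_eq_split hm hadm he hemin hyO (fun h => absurd (hzmin _ h) (not_le.2 hyz))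
      (fun x hx hyx => ?_) (fun x _ hxy h => absurd (hzmin x h) (by omega))
    have hzx : firstWideGap m S ≤ x :=
      not_lt.1 fun hxz => absurd (le_prev hx hxz) (not_le.2 hyx)
    generalize 2 * m * gapSteps m S = t at hbase hele
    omega

lemma exists_togglePair (hm : 0 < m) (hS : Toggleable m S) :
    ∃ c : TogglePair m, S = c.merged ∨ S = c.split := by
  by_cases h : Mergeable m S
  · obtain ⟨c, hc⟩ := exists_eq_split_of_mergeable hm hS h
    exact ⟨c, Or.inr hc⟩
  · obtain ⟨c, hc⟩ := exists_eq_merged_of_not_mergeable hm hS h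
    exact ⟨c, Or.inl hc⟩

end Construction

open Polynomial

def signedWeight (S : Finset ℕ) : ℤ[X] := (-1) ^ S.card * X ^ (oddParts S).card

lemma toggle_spec {m : ℕ} {S : Finset ℕ} (hm : 0 < m) (hS : Toggleable m S) :
    Toggleable m (toggle m S) ∧ toggle m (toggle m S) = S ∧
      (toggle m S).sum id = S.sum id ∧ signedWeight (toggle m S) = -signedWeight S := by
  obtain ⟨c, rfl | rfl⟩ := exists_togglePair hm hS
  · rw [c.toggle_merged, c.toggle_split]
    refine ⟨c.toggleable_split, rfl, c.sum_split, ?_⟩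
    rw [signedWeight, signedWeight, c.card_split, c.card_merged, c.card_oddParts_split,
      c.card_oddParts_merged]
    ring
  · rw [c.toggle_split, c.toggle_merged]
    refine ⟨c.toggleable_merged, rfl, c.sum_split.symm, ?_⟩
    rw [signedWeight, signedWeight, c.card_split, c.card_merged, c.card_oddParts_split,
      c.card_oddParts_merged]
    ring

lemma subset_range_of_sum_eq {S : Finset ℕ} {n : ℕ} (h : S.sum id = n) :
    S ⊆ range (n + 1) := fun _ hx =>
  mem_range.2 (Nat.lt_succ_of_le (h ▸ single_le_sum (f := id) (fun _ _ => Nat.zero_le _) hx))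

open scoped Classical in
def admissibleSet (m n : ℕ) : Finset (Finset ℕ) :=
  (range (n + 1)).powerset.filter fun S => S.sum id = n ∧ Admissible m S

open scoped Classical in
def oddMinSet (m n : ℕ) : Finset (Finset ℕ) := (admissibleSet m n).filter (¬ HasEvenMin ·)

lemma mem_admissibleSet {m n : ℕ} {S : Finset ℕ} :
    S ∈ admissibleSet m n ↔ S.sum id = n ∧ Admissible m S := by
  classical
  rw [admissibleSet, mem_filter, mem_powerset]
  exact ⟨fun h => h.2, fun h => ⟨subset_range_of_sum_eq h.1, h⟩⟩

lemma mem_oddMinSet {m n : ℕ} {S : Finset ℕ} :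
    S ∈ oddMinSet m n ↔ S.sum id = n ∧ Admissible m S ∧ ¬ HasEvenMin S := by
  classical
  rw [oddMinSet, mem_filter, mem_admissibleSet, and_assoc]

lemma mem_Aset {m n : ℕ} {S : Finset ℕ} :
    S ∈ Aset m n ↔ S.sum id = n ∧ HasEvenMin S ∧ ∀ x ∈ S, Even x → 2 * m ∣ x := by
  rw [Aset, mem_filter, mem_powerset]
  exact ⟨fun h => h.2, fun h => ⟨subset_range_of_sum_eq h.1, h⟩⟩

lemma mem_Bset {m n : ℕ} {S : Finset ℕ} :
    S ∈ Bset m n ↔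
      S.sum id = n ∧ (∀ x ∈ S, Odd x) ∧ ∀ x ∈ S, x - prev S x ≤ 2 * m := by
  rw [Bset, mem_filter, mem_powerset, forall_gap_descList_iff]
  exact ⟨fun h => h.2, fun h => ⟨subset_range_of_sum_eq h.1, h⟩⟩

lemma pow_pred_mul_eq_neg_signedWeight {S : Finset ℕ} (hS : S.Nonempty) :
    (-1 : ℤ[X]) ^ (S.card - 1) * X ^ (oddParts S).card = -signedWeight S := by
  obtain ⟨k, hk⟩ := Nat.exists_eq_succ_of_ne_zero (card_pos.2 hS).ne'
  rw [signedWeight, hk, Nat.succ_sub_one, pow_succ]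
  ring

lemma sum_Aset_filter_zero_mem (m n : ℕ) :
    ∑ S ∈ (Aset m n).filter (0 ∈ ·), (-1 : ℤ[X]) ^ (S.card - 1) * X ^ (oddParts S).card =
      ∑ T ∈ admissibleSet m n, signedWeight T := by
  refine sum_nbij' (fun S => S.erase 0) (insert 0) (fun S hS => ?_) (fun T hT => ?_)
    (fun S hS => insert_erase (mem_filter.1 hS).2)
    (fun T hT => erase_insert (mem_admissibleSet.1 hT).2.1) (fun S hS => ?_)
  · obtain ⟨hA, h0⟩ := mem_filter.1 hS
    obtain ⟨hsum, -, hdvd⟩ := mem_Aset.1 hA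
    refine mem_admissibleSet.2 ⟨by rwa [sum_erase S (show id 0 = 0 from rfl)],
      notMem_erase _ _, fun x hx hodd => ?_⟩
    exact hdvd x (mem_of_mem_erase hx) (Nat.not_odd_iff_even.1 hodd)
  · obtain ⟨hsum, h0, hdvd⟩ := mem_admissibleSet.1 hT
    refine mem_filter.2 ⟨mem_Aset.2 ⟨by rwa [sum_insert h0, id, zero_add],
      ⟨0, mem_insert_self _ _, Even.zero, fun _ _ => Nat.zero_le _⟩, fun x hx heven => ?_⟩,
      mem_insert_self _ _⟩
    rcases mem_insert.1 hx with rfl | hx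
    · exact dvd_zero _
    · exact hdvd x hx (Nat.not_odd_iff_even.2 heven)
  · have h0 := (mem_filter.1 hS).2
    rw [signedWeight, card_erase_of_mem h0, oddParts_erase,
      erase_eq_of_notMem fun h => Nat.not_odd_zero (mem_oddParts.1 h).2]

open scoped Classical in
lemma filter_Aset_zero_notMem (m n : ℕ) :
    (Aset m n).filter (0 ∉ ·) = (admissibleSet m n).filter HasEvenMin := by
  ext S
  simp only [mem_filter, mem_Aset, mem_admissibleSet, Admissible, Nat.not_odd_iff_even]
  tauto

lemma sum_Aset_eq_sum_oddMinSet (m n : ℕ) :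
    ∑ S ∈ Aset m n, (-1 : ℤ[X]) ^ (S.card - 1) * X ^ (oddParts S).card =
      ∑ S ∈ oddMinSet m n, signedWeight S := by
  classical
  have hneg :
      ∑ S ∈ (Aset m n).filter (0 ∉ ·), (-1 : ℤ[X]) ^ (S.card - 1) * X ^ (oddParts S).card =
      -∑ S ∈ (admissibleSet m n).filter HasEvenMin, signedWeight S := by
    rw [filter_Aset_zero_notMem, ← sum_neg_distrib]
    refine sum_congr rfl fun S hS => pow_pred_mul_eq_neg_signedWeight ?_
    obtain ⟨a, ha, -⟩ := (mem_filter.1 hS).2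
    exact ⟨a, ha⟩
  rw [← sum_filter_add_sum_filter_not (Aset m n) (0 ∈ ·), sum_Aset_filter_zero_mem, hneg,
    oddMinSet, ← sum_filter_add_sum_filter_not (admissibleSet m n) HasEvenMin]
  abel

lemma Bset_subset_oddMinSet (m n : ℕ) : Bset m n ⊆ oddMinSet m n := by
  intro S hS
  obtain ⟨hsum, hodd, -⟩ := mem_Bset.1 hS
  refine mem_oddMinSet.2 ⟨hsum, ⟨fun h0 => Nat.not_odd_zero (hodd 0 h0),
    fun x hx hx' => absurd (hodd x hx) hx'⟩, ?_⟩
  rintro ⟨a, ha, heven, -⟩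
  exact Nat.not_even_iff_odd.2 (hodd a ha) heven

lemma toggleable_of_mem_sdiff {m n : ℕ} {S : Finset ℕ} (hS : S ∈ oddMinSet m n \ Bset m n) :
    Toggleable m S := by
  obtain ⟨hmem, hB⟩ := mem_sdiff.1 hS
  obtain ⟨hsum, hadm, hnotEven⟩ := mem_oddMinSet.1 hmem
  refine ⟨hadm, hnotEven, ?_⟩
  by_contra h
  simp only [not_or, not_nonempty_iff_eq_empty] at h
  have hodd : ∀ x ∈ S, Odd x := fun x hx => by_contra fun hx' =>
    notMem_empty x (h.1 ▸ mem_evenParts.2 ⟨hx, hx'⟩)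
  refine hB (mem_Bset.2 ⟨hsum, hodd, fun x hx => not_lt.1 fun hgap => ?_⟩)
  rw [← oddParts_eq_self hodd] at hx hgap
  exact notMem_empty x (h.2 ▸ mem_filter.2 ⟨hx, hgap⟩)

lemma notMem_Bset_of_toggleable {m n : ℕ} {S : Finset ℕ} (hS : Toggleable m S) :
    S ∉ Bset m n := by
  intro hB
  obtain ⟨-, hodd, hgap⟩ := mem_Bset.1 hB
  rcases hS.2.2 with ⟨x, hx⟩ | ⟨x, hx⟩
  · exact (mem_evenParts.1 hx).2 (hodd x (mem_evenParts.1 hx).1)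
  · obtain ⟨hxO, hwide⟩ := mem_filter.1 hx
    rw [oddParts_eq_self hodd] at hxO hwide
    exact absurd (hgap x hxO) (not_le.2 hwide)

lemma sum_sdiff_Bset_eq_zero {m : ℕ} (hm : 0 < m) (n : ℕ) :
    ∑ S ∈ oddMinSet m n \ Bset m n, signedWeight S = 0 := by
  refine sum_involution (fun S _ => toggle m S) (fun S hS => ?_) (fun S hS hne heq => ?_)
    (fun S hS => ?_) (fun S hS => (toggle_spec hm (toggleable_of_mem_sdiff hS)).2.1)
  · rw [(toggle_spec hm (toggleable_of_mem_sdiff hS)).2.2.2, add_neg_cancel]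
  · have hw := (toggle_spec hm (toggleable_of_mem_sdiff hS)).2.2.2
    rw [heq] at hw
    exact hne (self_eq_neg.1 hw)
  · obtain ⟨htog, -, hsum, -⟩ := toggle_spec hm (toggleable_of_mem_sdiff hS)
    have hSsum := (mem_oddMinSet.1 (mem_sdiff.1 hS).1).1
    exact mem_sdiff.2 ⟨mem_oddMinSet.2 ⟨hsum.trans hSsum, htog.1, htog.2.1⟩,
      notMem_Bset_of_toggleable htog⟩

lemma sum_Bset_signedWeight (m n : ℕ) :
    ∑ S ∈ Bset m n, signedWeight S = ∑ S ∈ Bset m n, (-X : ℤ[X]) ^ S.card :=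
  sum_congr rfl fun S hS => by
    rw [signedWeight, oddParts_eq_self (mem_Bset.1 hS).2.1, neg_pow (X : ℤ[X])]

end

end PartitionInvolution

open scoped Classical in
theorem weighted_A_eq_weighted_B_general (m n : ℕ) (hm : 0 < m) :
    ∑ S ∈ Aset m n,
      (-1 : Polynomial ℤ) ^ (S.card - 1) *
        Polynomial.X ^ ((S.filter (fun x => Odd x)).card) =
    ∑ S ∈ Bset m n, (-(Polynomial.X : Polynomial ℤ)) ^ S.card := by
  open PartitionInvolution in
  calc _ = ∑ S ∈ oddMinSet m n, signedWeight S := sum_Aset_eq_sum_oddMinSet m n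
    _ = ∑ S ∈ oddMinSet m n \ Bset m n, signedWeight S + ∑ S ∈ Bset m n, signedWeight S :=
        (Finset.sum_sdiff (Bset_subset_oddMinSet m n)).symm
    _ = _ := by rw [sum_sdiff_Bset_eq_zero hm, zero_add, sum_Bset_signedWeight]

open scoped Classical in
/-- `∑_{λ ∈ A_m(n)} (-1)^{ℓ(λ)-1} a^{ℓ_o(λ)} = ∑_{μ ∈ B_m(n)} (-a)^{ℓ(μ)}`
as polynomials in `a`. -/
theorem weighted_A_eq_weighted_B (m n : ℕ) (hm : 0 < m) (hn : 1 ≤ n) :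
    ∑ S ∈ Aset m n,
      (-1 : Polynomial ℤ) ^ (S.card - 1) *
        Polynomial.X ^ ((S.filter (fun x => Odd x)).card) =
    ∑ S ∈ Bset m n, (-(Polynomial.X : Polynomial ℤ)) ^ S.card :=
  weighted_A_eq_weighted_B_general m n hm
end

section
/- For every positive integer k, the generating function for partitions into k distinct parts with smallest part equal to 1 and consecutive differences at most 2 is (-q;q)_{k-1} q^{k(k+1)/2}; that is, the number of such partitions of n equals the number of partitions of n - k(k+1)/2 into distinct parts each at most k-1. -/
/-!
Start from the staircase `k > k - 1 > ⋯ > 1`, of weight `k(k+1)/2`, and for each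
`t ∈ T ⊆ {1, …, k-1}` add one to each of the `t` largest parts. This raises the weight by `t`
and widens the gap between the `t`-th and `(t+1)`-st largest parts from 1 to 2, so it produces
a partition of the required kind; conversely, `T` is read off such a partition as the set of
positions of its gaps of size 2.
-/

open Finset

lemma length_descList (S : Finset ℕ) : (descList S).length = #S := by
  rw [descList, List.length_reverse, length_sort]

lemma toFinset_descList (S : Finset ℕ) : (descList S).toFinset = S := by
  rw [descList, List.toFinset_reverse, sort_toFinset]

lemma pairwise_descList (S : Finset ℕ) : (descList S).Pairwise (· > ·) :=
  List.pairwise_reverse.2 (sortedLT_sort S).pairwise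

lemma sum_descList (S : Finset ℕ) : (descList S).sum = S.sum id := by
  conv_rhs => rw [← toFinset_descList S]
  rw [List.sum_toFinset _ (pairwise_descList S).nodup, List.map_id]

lemma descList_toFinset {l : List ℕ} (hl : l.Pairwise (· > ·)) : descList l.toFinset = l := by
  have hsort : l.reverse.toFinset.sort (· ≤ ·) = l.reverse :=
    (List.toFinset_sort _ (List.nodup_reverse.2 hl.nodup)).2
      (List.pairwise_reverse.2 (hl.imp le_of_lt))
  rw [descList, ← List.toFinset_reverse, hsort, List.reverse_reverse]

lemma getD_descList_succ_lt {S : Finset ℕ} {i : ℕ} (hi : i + 1 < #S) :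
    (descList S).getD (i + 1) 0 < (descList S).getD i 0 := by
  have hlen := length_descList S
  rw [List.getD_eq_getElem _ _ (by omega), List.getD_eq_getElem _ _ (by omega)]
  exact List.pairwise_iff_getElem.1 (pairwise_descList S) _ _ _ _ (Nat.lt_succ_self i)

lemma getD_descList_card_sub_one {S : Finset ℕ} (h0 : 0 ∉ S) (h1 : 1 ∈ S) :
    (descList S).getD (#S - 1) 0 = 1 := by
  have hS : 0 < #S := card_pos.2 ⟨1, h1⟩
  have hlen : (S.sort (· ≤ ·)).length = #S := length_sort _
  rw [descList, List.getD_eq_getElem _ _ (by rw [List.length_reverse, hlen]; omega),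
    List.getElem_reverse]
  simp only [hlen, show #S - 1 - (#S - 1) = 0 by omega, sorted_zero_eq_min']
  exact le_antisymm (min'_le S 1 h1)
    (le_min' _ _ _ fun y hy => Nat.pos_of_ne_zero fun e => h0 (e ▸ hy))

lemma subset_range_sum_id_succ (S : Finset ℕ) : S ⊆ range (S.sum id + 1) :=
  fun _ hx => mem_range_succ_iff.2 (single_le_sum (f := id) (fun _ _ => Nat.zero_le _) hx)

lemma card_filter_lt_eq_card_filter_succ_lt_add (T : Finset ℕ) (j : ℕ) :
    #{t ∈ T | j < t} = #{t ∈ T | j + 1 < t} + if j + 1 ∈ T then 1 else 0 := by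
  rw [card_filter, card_filter, ← sum_ite_eq' T (j + 1) (fun _ => 1), ← sum_add_distrib]
  refine sum_congr rfl fun t _ => ?_
  split_ifs <;> omega

namespace StaircaseLift

variable (k : ℕ) (T : Finset ℕ)

/-- The parts are indexed from the largest one, which is `part k T 0`. -/
def part (j : ℕ) : ℕ := k - j + #{t ∈ T | j < t}

def parts : List ℕ := (List.range k).map (part k T)

lemma part_eq_part_succ_add {j : ℕ} (hj : j < k) :
    part k T j = part k T (j + 1) + 1 + if j + 1 ∈ T then 1 else 0 := by
  rw [part, part, card_filter_lt_eq_card_filter_succ_lt_add]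
  omega

lemma part_lt_part {i j : ℕ} (hij : i < j) (hj : j ≤ k) : part k T j < part k T i := by
  have : #{t ∈ T | j < t} ≤ #{t ∈ T | i < t} :=
    card_le_card (monotone_filter_right T fun _ _ ht => hij.trans ht)
  rw [part, part]
  omega

lemma part_sub_one {T : Finset ℕ} (hk : 0 < k) (hT : ∀ t ∈ T, t < k) :
    part k T (k - 1) = 1 := by
  have : #{t ∈ T | k - 1 < t} = 0 :=
    card_eq_zero.2 (filter_eq_empty_iff.2 fun t ht => by have := hT t ht; omega)
  rw [part, this]
  omega

lemma pairwise_parts : (parts k T).Pairwise (· > ·) :=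
  List.pairwise_map.2 (List.pairwise_lt_range.imp_of_mem fun _ hj hij =>
    part_lt_part k T hij (List.mem_range.1 hj).le)

lemma getD_parts {j : ℕ} (hj : j < k) : (parts k T).getD j 0 = part k T j := by
  simp [parts, hj]

lemma sum_parts {T : Finset ℕ} (hT : ∀ t ∈ T, t ≤ k) :
    (parts k T).sum = k * (k + 1) / 2 + T.sum id := by
  have staircase : ∑ j ∈ range k, (k - j) = k * (k + 1) / 2 := by
    have := sum_range_reflect (fun j => j) (k + 1)
    rw [sum_range_succ, sum_range_id] at this
    simp only [Nat.add_sub_cancel, Nat.sub_self, add_zero] at this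
    rw [this, Nat.mul_comm]
  have lifts : ∑ j ∈ range k, #{t ∈ T | j < t} = T.sum id := by
    simp only [card_filter]
    rw [sum_comm]
    refine sum_congr rfl fun t ht => ?_
    have : {j ∈ range k | j < t} = range t := by
      ext j
      simp only [mem_filter, mem_range]
      have := hT t ht
      omega
    rw [← card_filter, this, card_range, id]
  rw [parts, ← List.sum_toFinset _ List.nodup_range, List.toFinset_range]
  exact (sum_add_distrib).trans (by rw [staircase, lifts])

def gapTwoSet (S : Finset ℕ) : Finset ℕ :=
  {t ∈ Icc 1 (k - 1) | (descList S).getD (t - 1) 0 = (descList S).getD t 0 + 2}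

lemma descList_parts_toFinset : descList (parts k T).toFinset = parts k T :=
  descList_toFinset (pairwise_parts k T)

lemma card_parts_toFinset : #(parts k T).toFinset = k := by
  rw [List.toFinset_card_of_nodup (pairwise_parts k T).nodup, parts, List.length_map,
    List.length_range]

lemma zero_notMem_parts_toFinset : 0 ∉ (parts k T).toFinset := by
  simp only [parts, List.mem_toFinset, List.mem_map, List.mem_range, part, not_exists, not_and]
  intro j hj
  omega

lemma one_mem_parts_toFinset {T : Finset ℕ} (hk : 0 < k) (hT : ∀ t ∈ T, t < k) :
    1 ∈ (parts k T).toFinset := by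
  rw [List.mem_toFinset, ← part_sub_one k hk hT]
  exact List.mem_map_of_mem (List.mem_range.2 (by omega))

lemma getD_parts_sub_getD_succ_le_two {i : ℕ} (hi : i + 1 < k) :
    (parts k T).getD i 0 - (parts k T).getD (i + 1) 0 ≤ 2 := by
  rw [getD_parts k T hi, getD_parts k T (by omega), part_eq_part_succ_add k T (by omega)]
  split_ifs <;> omega

lemma gapTwoSet_parts_toFinset {T : Finset ℕ} (hT : T ⊆ Icc 1 (k - 1)) :
    gapTwoSet k (parts k T).toFinset = T := by
  ext t
  rw [gapTwoSet, mem_filter, descList_parts_toFinset]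
  by_cases ht : t ∈ Icc 1 (k - 1)
  · have := mem_Icc.1 ht
    rw [getD_parts k T (by omega), getD_parts k T (by omega),
      part_eq_part_succ_add k T (by omega), Nat.sub_add_cancel this.1]
    split_ifs with h <;> simp [ht, h]
  · exact iff_of_false (fun h => ht h.1) (fun h => ht (hT h))

lemma part_gapTwoSet {S : Finset ℕ} (hcard : #S = k) (h0 : 0 ∉ S) (h1 : 1 ∈ S)
    (hgap : ∀ i, i + 1 < k → (descList S).getD i 0 - (descList S).getD (i + 1) 0 ≤ 2)
    {j : ℕ} (hj : j < k) : part k (gapTwoSet k S) j = (descList S).getD j 0 := by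
  have hT : ∀ t ∈ gapTwoSet k S, t < k := fun t ht => by
    have := mem_Icc.1 (mem_filter.1 ht).1
    omega
  induction Nat.le_sub_one_of_lt hj using Nat.decreasingInduction with
  | self => rw [part_sub_one k (by omega) hT, ← hcard, getD_descList_card_sub_one h0 h1]
  | of_succ j hj ih =>
    have hlt := getD_descList_succ_lt (S := S) (i := j) (by omega)
    have hle := hgap j (by omega)
    have hmem : j + 1 ∈ gapTwoSet k S ↔
        (descList S).getD j 0 = (descList S).getD (j + 1) 0 + 2 := by
      simp only [gapTwoSet, mem_filter, mem_Icc, Nat.add_sub_cancel]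
      exact and_iff_right ⟨by omega, by omega⟩
    rw [part_eq_part_succ_add k _ (by omega), ih (by omega)]
    split_ifs with h
    · have := hmem.1 h
      omega
    · have := mt hmem.2 h
      omega

lemma parts_gapTwoSet {S : Finset ℕ} (hcard : #S = k) (h0 : 0 ∉ S) (h1 : 1 ∈ S)
    (hgap : ∀ i, i + 1 < k → (descList S).getD i 0 - (descList S).getD (i + 1) 0 ≤ 2) :
    parts k (gapTwoSet k S) = descList S := by
  have hlen : (parts k (gapTwoSet k S)).length = (descList S).length := by
    rw [parts, List.length_map, List.length_range, length_descList, hcard]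
  refine List.ext_getElem hlen fun j hj _ => ?_
  have hjk : j < k := by rwa [hlen, length_descList, hcard] at hj
  rw [← List.getD_eq_getElem _ 0, ← List.getD_eq_getElem _ 0, getD_parts k _ hjk]
  exact part_gapTwoSet k hcard h0 h1 hgap hjk

end StaircaseLift

open scoped Classical in
/-- The number of partitions of `n` into `k` distinct parts with smallest part `1` and
consecutive differences at most `2` equals the number of partitions of `n - k(k+1)/2`
into distinct parts each at most `k - 1`; i.e. the generating function of the former is
`(-q;q)_{k-1} q^{k(k+1)/2}`. -/
theorem D_k_generating_function (k n : ℕ) (hk : 0 < k) (hn : k * (k + 1) / 2 ≤ n) :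
    (((Finset.range (n + 1)).powerset.filter
      (fun S => S.sum id = n ∧ S.card = k ∧ 0 ∉ S ∧ 1 ∈ S ∧
        ∀ i, i + 1 < k →
          (descList S).getD i 0 - (descList S).getD (i + 1) 0 ≤ 2)).card) =
    ((Finset.Icc 1 (k - 1)).powerset.filter
      (fun T => T.sum id = n - k * (k + 1) / 2)).card := by
  open StaircaseLift in
  refine card_nbij' (gapTwoSet k) (fun T => (parts k T).toFinset) ?_ ?_ ?_ ?_
  · intro S hS
    simp only [mem_coe, mem_filter, mem_powerset] at hS ⊢
    obtain ⟨-, hsum, hcard, h0, h1, hgap⟩ := hS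
    have hT : gapTwoSet k S ⊆ Icc 1 (k - 1) := filter_subset _ _
    have := sum_parts k fun t ht => (mem_Icc.1 (hT ht)).2.trans (Nat.sub_le k 1)
    rw [parts_gapTwoSet k hcard h0 h1 hgap, sum_descList, hsum] at this
    exact ⟨hT, by omega⟩
  · intro T hT
    simp only [mem_coe, mem_filter, mem_powerset] at hT ⊢
    obtain ⟨hT, hsum⟩ := hT
    have hlt : ∀ t ∈ T, t < k := fun t ht => by have := mem_Icc.1 (hT ht); omega
    have hsum' : (parts k T).toFinset.sum id = n := by
      rw [← sum_descList, descList_parts_toFinset, sum_parts k fun t ht => (hlt t ht).le, hsum]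
      omega
    refine ⟨hsum' ▸ subset_range_sum_id_succ _, hsum', card_parts_toFinset k T,
      zero_notMem_parts_toFinset k T, one_mem_parts_toFinset k hk hlt, fun i hi => ?_⟩
    rw [descList_parts_toFinset]
    exact getD_parts_sub_getD_succ_le_two k T hi
  · intro S hS
    obtain ⟨-, -, hcard, h0, h1, hgap⟩ := mem_filter.1 hS
    simp only [parts_gapTwoSet k hcard h0 h1 hgap, toFinset_descList]
  · intro T hT
    exact gapTwoSet_parts_toFinset k (mem_powerset.1 (mem_filter.1 hT).1)
end

section
/- For every positive integer n and nonnegative integer k, the number of partitions of n into distinct parts with smallest part odd, exactly k odd parts, and an even number of parts equals the number of such partitions with exactly k odd parts and an odd number of parts, unless n = k^2, in which case they differ by exactly 1 (the difference being (-1)^k when signed by parity of the number of parts). -/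
/-!
Splitting the smallest part `2b + 1 > 1` into `1 + 2b`, and conversely merging the part `1`
with the least other part `e` when `e` is even and `e + 1` is not a part, is a sign-reversing
involution preserving `n` and the number of odd parts. The survivors contain `1` and cannot be
merged; deleting the `1` and lowering every other odd part by `2` maps those with `k + 1 ≥ 2` odd
parts bijectively onto the partitions of `n - (2k + 1)` with `k` odd parts, while with a single
odd part only `{1}` survives. Induction on `k` leaves the single partition `{1, 3, …, 2k - 1}`.
-/

open scoped Classical in
/-- `Pdo n` : partitions of `n` into distinct parts with smallest part odd,
encoded as finsets of parts. -/
noncomputable def Pdo (n : ℕ) : Finset (Finset ℕ) :=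
  (Finset.range (n + 1)).powerset.filter
    (fun S => S.sum id = n ∧ ∃ m ∈ S, Odd m ∧ ∀ x ∈ S, m ≤ x)

open Finset

open scoped Classical

theorem mem_Pdo {n : ℕ} {S : Finset ℕ} :
    S ∈ Pdo n ↔ ∑ x ∈ S, x = n ∧ ∃ m ∈ S, Odd m ∧ ∀ x ∈ S, m ≤ x := by
  refine ⟨fun h => (mem_filter.mp h).2, fun h => mem_filter.mpr ⟨?_, h⟩⟩
  refine mem_powerset.mpr fun x hx => mem_range.mpr ?_
  have := single_le_sum (fun i _ => Nat.zero_le i) hx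
  omega

theorem pos_of_mem_Pdo {n x : ℕ} {S : Finset ℕ} (hS : S ∈ Pdo n) (hx : x ∈ S) : 0 < x := by
  obtain ⟨-, m, -, hm, hmin⟩ := mem_Pdo.mp hS
  exact hm.pos.trans_le (hmin x hx)

noncomputable def pdoWithOddParts (n k : ℕ) : Finset (Finset ℕ) :=
  (Pdo n).filter (fun S => #(S.filter (fun x => Odd x)) = k)

noncomputable def signedCount (n k : ℕ) : ℤ :=
  ∑ S ∈ pdoWithOddParts n k, (-1 : ℤ) ^ #S

theorem signedCount_zero (n : ℕ) : signedCount n 0 = 0 := by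
  refine sum_eq_zero fun S hS => absurd (mem_filter.mp hS).2 ?_
  obtain ⟨-, m, hm, hmo, -⟩ := mem_Pdo.mp (mem_filter.mp hS).1
  exact (card_pos.mpr ⟨m, mem_filter.mpr ⟨hm, hmo⟩⟩).ne'

section SplitMerge

noncomputable def leastPart (S : Finset ℕ) : ℕ := sInf (S : Set ℕ)

theorem leastPart_eq {S : Finset ℕ} {m : ℕ} (hm : m ∈ S) (h : ∀ x ∈ S, m ≤ x) :
    leastPart S = m :=
  IsLeast.csInf_eq ⟨hm, fun x hx => h x hx⟩

def CanMergeOne (S : Finset ℕ) : Prop :=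
  ∃ e ∈ S, Even e ∧ e + 1 ∉ S ∧ ∀ x ∈ S, x ≠ 1 → e ≤ x

noncomputable def splitOff (S : Finset ℕ) : Finset ℕ :=
  insert 1 (insert (leastPart S - 1) (S.erase (leastPart S)))

noncomputable def mergeOne (S : Finset ℕ) : Finset ℕ :=
  insert (leastPart (S.erase 1) + 1) ((S.erase 1).erase (leastPart (S.erase 1)))

variable {S : Finset ℕ} {n : ℕ}

theorem splitOff_eq {m : ℕ} (hm : m ∈ S) (hmin : ∀ x ∈ S, m ≤ x) :
    splitOff S = insert 1 (insert (m - 1) (S.erase m)) := by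
  rw [splitOff, leastPart_eq hm hmin]

theorem mergeOne_eq {e : ℕ} (he : e ∈ S) (he1 : e ≠ 1) (hmin : ∀ x ∈ S, x ≠ 1 → e ≤ x) :
    mergeOne S = insert (e + 1) ((S.erase 1).erase e) := by
  rw [mergeOne, leastPart_eq (mem_erase.mpr ⟨he1, he⟩)
    fun x hx => hmin x (mem_erase.mp hx).2 (mem_erase.mp hx).1]

theorem splitOff_mem_Pdo (hS : S ∈ Pdo n) (h1 : 1 ∉ S) :
    splitOff S ∈ Pdo n ∧ 1 ∈ splitOff S ∧ CanMergeOne (splitOff S) ∧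
      #((splitOff S).filter (fun x => Odd x)) = #(S.filter (fun x => Odd x)) ∧
      #(splitOff S) = #S + 1 ∧ mergeOne (splitOff S) = S := by
  obtain ⟨hsum, m, hm, hmo, hmin⟩ := mem_Pdo.mp hS
  have hm3 : 3 ≤ m := by
    have : m ≠ 1 := by rintro rfl; exact h1 hm
    grind
  rw [splitOff_eq hm hmin]
  have hm1 : m - 1 ∉ S.erase m := fun h => by have := hmin _ (mem_of_mem_erase h); omega
  have h1' : 1 ∉ insert (m - 1) (S.erase m) := by grind
  refine ⟨mem_Pdo.mpr ⟨?_, 1, mem_insert_self _ _, odd_one, by grind⟩, mem_insert_self _ _,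
    ⟨m - 1, by simp, by grind, by grind, by grind⟩, ?_, ?_, ?_⟩
  · rw [sum_insert h1', sum_insert hm1, ← hsum, ← add_sum_erase _ _ hm]; omega
  · have hodd : (insert 1 (insert (m - 1) (S.erase m))).filter (fun x => Odd x) =
        insert 1 ((S.filter (fun x => Odd x)).erase m) := by
      rw [filter_insert, filter_insert, filter_erase, if_pos odd_one,
        if_neg (by grind : ¬Odd (m - 1))]
    rw [hodd, card_insert_of_notMem (by simp [h1]),
      card_erase_add_one (mem_filter.mpr ⟨hm, hmo⟩)]
  · rw [card_insert_of_notMem h1', card_insert_of_notMem hm1, card_erase_add_one hm]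
  · rw [mergeOne_eq (e := m - 1) (by simp) (by omega) (by grind)]
    grind

theorem mergeOne_mem_Pdo (hS : S ∈ Pdo n) (h1 : 1 ∈ S) (hM : CanMergeOne S) :
    mergeOne S ∈ Pdo n ∧ 1 ∉ mergeOne S ∧
      #((mergeOne S).filter (fun x => Odd x)) = #(S.filter (fun x => Odd x)) ∧
      #(mergeOne S) + 1 = #S ∧ splitOff (mergeOne S) = S := by
  obtain ⟨e, he, hee, he1, hmin⟩ := hM
  have he2 : 2 ≤ e := by
    have := pos_of_mem_Pdo hS he
    grind
  rw [mergeOne_eq he (by omega) hmin]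
  have he' : e ∈ S.erase 1 := mem_erase.mpr ⟨by omega, he⟩
  have hnew : e + 1 ∉ (S.erase 1).erase e :=
    fun h => he1 (mem_of_mem_erase (mem_of_mem_erase h))
  refine ⟨mem_Pdo.mpr ⟨?_, e + 1, mem_insert_self _ _, hee.add_one, by grind⟩, by grind,
    ?_, ?_, ?_⟩
  · rw [sum_insert hnew, ← (mem_Pdo.mp hS).1, ← add_sum_erase _ _ h1, ← add_sum_erase _ _ he']
    omega
  · have hodd : (insert (e + 1) ((S.erase 1).erase e)).filter (fun x => Odd x) =
        insert (e + 1) ((S.filter (fun x => Odd x)).erase 1) := by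
      rw [filter_insert, if_pos hee.add_one, filter_erase, filter_erase, erase_eq_of_notMem
        fun h => Nat.not_odd_iff_even.mpr hee (mem_filter.mp (mem_of_mem_erase h)).2]
    rw [hodd, card_insert_of_notMem (fun h => he1 (mem_filter.mp (mem_of_mem_erase h)).1),
      card_erase_add_one (mem_filter.mpr ⟨h1, odd_one⟩)]
  · rw [card_insert_of_notMem hnew, card_erase_add_one he', card_erase_add_one h1]
  · rw [splitOff_eq (mem_insert_self _ _) (by grind)]
    grind

end SplitMerge

theorem sum_one_notMem_add_sum_canMergeOne (n k : ℕ) :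
    ∑ S ∈ (pdoWithOddParts n k).filter (fun S => 1 ∉ S), (-1 : ℤ) ^ #S +
      ∑ S ∈ (pdoWithOddParts n k).filter (fun S => 1 ∈ S ∧ CanMergeOne S), (-1 : ℤ) ^ #S = 0 := by
  rw [← eq_neg_iff_add_eq_zero, ← sum_neg_distrib]
  refine sum_nbij' splitOff mergeOne ?_ ?_ ?_ ?_ ?_ <;>
    simp only [pdoWithOddParts, mem_filter, and_imp]
  · intro S hS hk h1
    obtain ⟨hP, h1', hM, hodd, -⟩ := splitOff_mem_Pdo hS h1
    exact ⟨⟨hP, hodd.trans hk⟩, h1', hM⟩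
  · intro S hS hk h1 hM
    obtain ⟨hP, h1', hodd, -⟩ := mergeOne_mem_Pdo hS h1 hM
    exact ⟨⟨hP, hodd.trans hk⟩, h1'⟩
  · intro S hS _ h1
    obtain ⟨-, -, -, -, -, hinv⟩ := splitOff_mem_Pdo hS h1
    exact hinv
  · intro S hS _ h1 hM
    obtain ⟨-, -, -, -, hinv⟩ := mergeOne_mem_Pdo hS h1 hM
    exact hinv
  · intro S hS _ h1
    obtain ⟨-, -, -, -, hcard, -⟩ := splitOff_mem_Pdo hS h1
    rw [hcard, pow_succ]
    ring

theorem signedCount_eq_sum_not_canMergeOne (n k : ℕ) :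
    signedCount n k =
      ∑ S ∈ (pdoWithOddParts n k).filter (fun S => 1 ∈ S ∧ ¬CanMergeOne S), (-1 : ℤ) ^ #S := by
  rw [signedCount, ← sum_filter_not_add_sum_filter _ (fun S => 1 ∈ S),
    ← sum_filter_add_sum_filter_not ((pdoWithOddParts n k).filter (fun S => 1 ∈ S)) CanMergeOne,
    filter_filter, filter_filter, ← add_assoc, sum_one_notMem_add_sum_canMergeOne, zero_add]

def raiseOdd (x : ℕ) : ℕ := if Odd x then x + 2 else x

def lowerOdd (x : ℕ) : ℕ := if Odd x then x - 2 else x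

theorem odd_raiseOdd_iff {x : ℕ} : Odd (raiseOdd x) ↔ Odd x := by
  unfold raiseOdd; split_ifs with h <;> simp [h, Nat.odd_add]

theorem raiseOdd_injective : Function.Injective raiseOdd := by
  intro x y h
  have hxy := odd_raiseOdd_iff (x := x)
  rw [h, odd_raiseOdd_iff] at hxy
  unfold raiseOdd at h; split_ifs at h <;> grind

theorem le_raiseOdd (x : ℕ) : x ≤ raiseOdd x := by
  unfold raiseOdd; split_ifs <;> omega

theorem raiseOdd_ne_one (x : ℕ) : raiseOdd x ≠ 1 := by
  unfold raiseOdd; split_ifs <;> grind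

theorem lowerOdd_raiseOdd (x : ℕ) : lowerOdd (raiseOdd x) = x := by
  unfold lowerOdd; simp only [odd_raiseOdd_iff]; unfold raiseOdd; split_ifs <;> omega

theorem raiseOdd_lowerOdd {x : ℕ} (h : Odd x → 3 ≤ x) : raiseOdd (lowerOdd x) = x := by
  unfold raiseOdd lowerOdd; split_ifs <;> grind

theorem sum_image_raiseOdd (T : Finset ℕ) :
    ∑ x ∈ T.image raiseOdd, x = ∑ x ∈ T, x + 2 * #(T.filter (fun x => Odd x)) := by
  rw [sum_image raiseOdd_injective.injOn, card_filter, mul_sum, ← sum_add_distrib]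
  refine sum_congr rfl fun x _ => ?_
  unfold raiseOdd; split_ifs <;> rfl

theorem filter_odd_image_raiseOdd (T : Finset ℕ) :
    (T.image raiseOdd).filter (fun x => Odd x) = (T.filter (fun x => Odd x)).image raiseOdd := by
  rw [filter_image]; simp only [odd_raiseOdd_iff]

section ConsOne

def consOne (T : Finset ℕ) : Finset ℕ := insert 1 (T.image raiseOdd)

variable {T : Finset ℕ}

theorem one_notMem_image_raiseOdd (T : Finset ℕ) : 1 ∉ T.image raiseOdd := by
  simp [raiseOdd_ne_one]

theorem mem_consOne {x : ℕ} : x ∈ consOne T ↔ x = 1 ∨ ∃ y ∈ T, raiseOdd y = x := by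
  simp [consOne]

theorem sum_consOne (T : Finset ℕ) :
    ∑ x ∈ consOne T, x = ∑ x ∈ T, x + 2 * #(T.filter (fun x => Odd x)) + 1 := by
  rw [consOne, sum_insert (one_notMem_image_raiseOdd T), sum_image_raiseOdd, add_comm]

theorem card_consOne (T : Finset ℕ) : #(consOne T) = #T + 1 := by
  rw [consOne, card_insert_of_notMem (one_notMem_image_raiseOdd T),
    card_image_of_injective _ raiseOdd_injective]

theorem card_filter_odd_consOne (T : Finset ℕ) :
    #((consOne T).filter (fun x => Odd x)) = #(T.filter (fun x => Odd x)) + 1 := by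
  rw [consOne, filter_insert, if_pos odd_one, filter_odd_image_raiseOdd,
    card_insert_of_notMem (one_notMem_image_raiseOdd _),
    card_image_of_injective _ raiseOdd_injective]

theorem image_lowerOdd_erase_one_consOne (T : Finset ℕ) :
    ((consOne T).erase 1).image lowerOdd = T := by
  rw [consOne, erase_insert (one_notMem_image_raiseOdd T), image_image]
  simp [Function.comp_def, lowerOdd_raiseOdd]

theorem consOne_image_lowerOdd_erase_one {S : Finset ℕ} (h1 : 1 ∈ S) :
    consOne ((S.erase 1).image lowerOdd) = S := by
  rw [consOne, image_image, image_congr (g := id), image_id, insert_erase h1]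
  intro x hx
  refine raiseOdd_lowerOdd fun hodd => ?_
  have := (mem_erase.mp hx).1
  grind

theorem not_canMergeOne_consOne {m : ℕ} (hT : T ∈ Pdo m) : ¬CanMergeOne (consOne T) := by
  rintro ⟨e, he, hee, he1, hmin⟩
  obtain ⟨-, p, hp, hpo, hpmin⟩ := mem_Pdo.mp hT
  have heT : e ∈ T := by
    obtain rfl | ⟨y, hy, rfl⟩ := mem_consOne.mp he
    · exact absurd hee (by decide)
    · have hy' : ¬Odd y := fun h => Nat.not_odd_iff_even.mpr hee (odd_raiseOdd_iff.mpr h)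
      simpa [raiseOdd, hy'] using hy
  have hp2 : p + 2 ∈ consOne T := mem_consOne.mpr (.inr ⟨p, hp, by simp [raiseOdd, hpo]⟩)
  have := hmin _ hp2 (by omega)
  have := hpmin e heT
  -- `p < e ≤ p + 2` with `p` odd and `e` even
  have : e + 1 = p + 2 := by grind
  exact he1 (this ▸ hp2)

theorem exists_odd_least_of_not_canMergeOne {n : ℕ} (hS : consOne T ∈ Pdo n)
    (hM : ¬CanMergeOne (consOne T)) (hT : T.Nonempty) : ∃ c ∈ T, Odd c ∧ ∀ x ∈ T, c ≤ x := by
  obtain ⟨c, hc, hmin⟩ := T.exists_min_image id hT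
  refine ⟨c, hc, ?_, hmin⟩
  by_contra hodd
  have hcS : c ∈ consOne T := mem_consOne.mpr (.inr ⟨c, hc, by simp [raiseOdd, hodd]⟩)
  refine hM ⟨c, hcS, Nat.not_odd_iff_even.mp hodd, fun h => ?_, fun x hx hx1 => ?_⟩
  · obtain h | ⟨y, hy, hyc⟩ := mem_consOne.mp h
    · exact (pos_of_mem_Pdo hS hcS).ne' (by omega)
    · have := hmin y hy
      unfold raiseOdd at hyc
      split_ifs at hyc <;> grind
  · obtain rfl | ⟨y, hy, rfl⟩ := mem_consOne.mp hx
    · exact absurd rfl hx1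
    · exact (hmin y hy).trans (le_raiseOdd y)

end ConsOne

theorem sum_not_canMergeOne_one (n : ℕ) :
    ∑ S ∈ (pdoWithOddParts n 1).filter (fun S => 1 ∈ S ∧ ¬CanMergeOne S), (-1 : ℤ) ^ #S =
      if n = 1 then -1 else 0 := by
  suffices h : (pdoWithOddParts n 1).filter (fun S => 1 ∈ S ∧ ¬CanMergeOne S) =
      ({{1}} : Finset (Finset ℕ)).filter (fun _ => n = 1) by
    rw [h, sum_filter, sum_singleton, card_singleton, pow_one]
  ext S
  simp only [pdoWithOddParts, mem_filter, mem_singleton]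
  constructor
  · rintro ⟨⟨hS, hS1⟩, h1, hM⟩
    obtain ⟨T, rfl⟩ : ∃ T, consOne T = S := ⟨_, consOne_image_lowerOdd_erase_one h1⟩
    rw [card_filter_odd_consOne, add_eq_right, card_eq_zero, filter_eq_empty_iff] at hS1
    obtain rfl : T = ∅ := by
      refine T.eq_empty_or_nonempty.resolve_right fun hT => ?_
      obtain ⟨c, hc, hco, -⟩ := exists_odd_least_of_not_canMergeOne hS hM hT
      exact hS1 hc hco
    have hsum := (mem_Pdo.mp hS).1
    rw [sum_consOne] at hsum
    exact ⟨rfl, by simpa using hsum.symm⟩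
  · rintro ⟨rfl, rfl⟩
    refine ⟨⟨mem_Pdo.mpr ⟨by simp, 1, by simp, odd_one, by simp⟩, by decide⟩, by simp, ?_⟩
    rintro ⟨e, he, hee, -⟩
    rw [mem_singleton.mp he] at hee
    exact Nat.not_even_one hee

theorem sum_not_canMergeOne_succ (n k : ℕ) (hk : 1 ≤ k) :
    ∑ S ∈ (pdoWithOddParts n (k + 1)).filter (fun S => 1 ∈ S ∧ ¬CanMergeOne S), (-1 : ℤ) ^ #S =
      -signedCount (n - (2 * k + 1)) k := by
  rw [signedCount, ← sum_neg_distrib]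
  refine sum_nbij' (fun S => (S.erase 1).image lowerOdd) consOne ?_ ?_ ?_ ?_ ?_ <;>
    simp only [pdoWithOddParts, mem_filter, and_imp]
  · intro S hS hSk h1 hM
    obtain ⟨T, rfl⟩ : ∃ T, consOne T = S := ⟨_, consOne_image_lowerOdd_erase_one h1⟩
    have hsum := (mem_Pdo.mp hS).1
    rw [sum_consOne] at hsum
    rw [card_filter_odd_consOne, add_left_inj] at hSk
    obtain ⟨x, hx⟩ := card_pos.mp (hSk ▸ hk : 0 < #(T.filter fun x => Odd x))
    rw [image_lowerOdd_erase_one_consOne]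
    exact ⟨mem_Pdo.mpr ⟨by omega, exists_odd_least_of_not_canMergeOne hS hM
      ⟨x, (mem_filter.mp hx).1⟩⟩, hSk⟩
  · intro T hT hTk
    obtain ⟨hsum, p, hp, hpo, -⟩ := mem_Pdo.mp hT
    have hpos : 0 < ∑ x ∈ T, x :=
      hpo.pos.trans_le (single_le_sum (f := id) (fun _ _ => Nat.zero_le _) hp)
    refine ⟨⟨mem_Pdo.mpr ⟨?_, 1, mem_insert_self _ _, odd_one, fun x hx => ?_⟩, ?_⟩,
      mem_insert_self _ _, not_canMergeOne_consOne hT⟩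
    · rw [sum_consOne, hTk]; omega
    · obtain rfl | ⟨y, hy, rfl⟩ := mem_consOne.mp hx
      · rfl
      · exact (pos_of_mem_Pdo hT hy).trans_le (le_raiseOdd y)
    · rw [card_filter_odd_consOne, hTk]
  · intro S _ _ h1 _
    exact consOne_image_lowerOdd_erase_one h1
  · intro T _ _
    exact image_lowerOdd_erase_one_consOne T
  · intro S _ _ h1 _
    obtain ⟨T, rfl⟩ : ∃ T, consOne T = S := ⟨_, consOne_image_lowerOdd_erase_one h1⟩
    rw [image_lowerOdd_erase_one_consOne, card_consOne, pow_succ]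
    ring

theorem signedCount_succ (n k : ℕ) :
    signedCount n (k + 1) = if n = (k + 1) ^ 2 then (-1 : ℤ) ^ (k + 1) else 0 := by
  induction k generalizing n with
  | zero => rw [signedCount_eq_sum_not_canMergeOne, sum_not_canMergeOne_one]; simp
  | succ k ih =>
    rw [signedCount_eq_sum_not_canMergeOne, sum_not_canMergeOne_succ n (k + 1) (by omega), ih]
    have hsq : n - (2 * (k + 1) + 1) = (k + 1) ^ 2 ↔ n = (k + 1 + 1) ^ 2 := by
      have : 0 < (k + 1) ^ 2 := by positivity
      rw [show (k + 1 + 1) ^ 2 = (k + 1) ^ 2 + (2 * (k + 1) + 1) by ring]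
      omega
    simp only [hsq]
    split_ifs <;> ring

/-- Refined sign balance: among partitions of `n` into distinct parts with smallest part
odd and exactly `k` odd parts, the signed count by parity of the number of parts is
`(-1)^k` if `n = k²` and `0` otherwise. -/
theorem refined_sign_balance (n k : ℕ) (hn : 1 ≤ n) :
    ∑ S ∈ (Pdo n).filter (fun S => (S.filter (fun x => Odd x)).card = k),
      (-1 : ℤ) ^ S.card =
    if n = k ^ 2 then (-1 : ℤ) ^ k else 0 := by
  rcases k with _ | k
  · rw [if_neg (by omega)]
    exact signedCount_zero n
  · exact signedCount_succ n k
end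

section
/- As formal power series in q and a: ∑_{k≥0} (-a)^k q^{k(k+1)/2} (-q;q)_{k-1} / (aq^2;q^2)_k (with the k=0 term equal to 1) equals ∑_{n≥0} q^{2n} (q^{2n+2};q^2)_∞ (aq^{2n+1};q^2)_∞; i.e., the two expansions of the partial theta function ∑_{k≥0}(-a)^k q^{k^2} agree. -/
/-!
Both sides are compared with the partial theta series `θ(a) = ∑ (-a)^k q^(k²)`, which satisfies
`θ(a) = 1 - a q θ(a q²)`. Truncations of the left side satisfy the same functional equation up to
an error of order `q^((M+2)(M+3)/2)` (a telescoping identity in `M`), so they agree with `θ` to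
order `q^(M+1)`. On the right, Euler's expansion
`(a q^(2n+1); q²)_∞ = ∑ₘ (-a)^m q^(m² + 2nm) / (q²; q²)_m` turns the sum into
`∑ₘ (-a)^m q^(m²) / (q²; q²)_m · ∑ₙ q^(2n(m+1)) (q^(2n+2); q²)_∞`, whose inner sum is `(q²; q²)_m`.
Modulo `q^(N+1)` every infinite product is a finite one, so the right side is computed in a ring
where `q` is nilpotent.
-/

open PowerSeries Finset

noncomputable section

namespace PartialTheta

lemma mul_inverse_mul_cancel_right {M₀ : Type*} [CommMonoidWithZero M₀] {u v : M₀}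
    (hv : IsUnit v) : v * Ring.inverse (u * v) = Ring.inverse u := by
  rw [Ring.mul_inverse_rev, Ring.mul_inverse_cancel_left v _ hv]

section Nilpotent

variable {S : Type*} [CommRing S]

def partialTheta (x a : S) (M : ℕ) : S := ∑ k ∈ range (M + 1), (-a) ^ k * x ^ (k * k)

lemma partialTheta_succ (x a : S) (M : ℕ) :
    partialTheta x a (M + 1) = 1 - a * x * partialTheta x (a * x ^ 2) M := by
  rw [partialTheta, sum_range_succ', partialTheta, mul_sum, sub_eq_add_neg, ← sum_neg_distrib,
    add_comm]
  simp only [pow_zero, mul_zero, one_mul]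
  exact congrArg _ (sum_congr rfl fun k _ => by ring)

/-- `qPoch x c e K` is the q-Pochhammer symbol `(c x^e; x²)_K`. -/
def qPoch (x c : S) (e K : ℕ) : S := ∏ j ∈ range K, (1 - c * x ^ (e + 2 * j))

variable {x : S} {N : ℕ}

lemma isUnit_qPoch (hx : IsNilpotent x) (c : S) {e : ℕ} (he : 0 < e) (K : ℕ) :
    IsUnit (qPoch x c e K) :=
  IsUnit.prod_iff.mpr fun j _ =>
    ((Commute.all _ _).isNilpotent_mul_left (hx.pow_of_pos (by omega))).isUnit_one_sub

lemma qPoch_succ (x c : S) (e K : ℕ) :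
    qPoch x c e (K + 1) = qPoch x c e K * (1 - c * x ^ (e + 2 * K)) :=
  prod_range_succ _ _

lemma qPoch_eq_one (hx : x ^ (N + 1) = 0) (c : S) {e : ℕ} (he : N + 1 ≤ e) :
    qPoch x c e (N + 1) = 1 :=
  prod_eq_one fun j _ => by rw [pow_eq_zero_of_le (by omega) hx, mul_zero, sub_zero]

lemma qPoch_eq_mul_qPoch_add_two (hx : x ^ (N + 1) = 0) (c : S) (e : ℕ) :
    qPoch x c e (N + 1) = (1 - c * x ^ e) * qPoch x c (e + 2) (N + 1) := by
  rw [qPoch, prod_range_succ', qPoch, prod_range_succ,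
    pow_eq_zero_of_le (n := e + 2 + 2 * N) (by omega) hx]
  simp only [mul_zero, sub_zero, mul_one, add_zero]
  rw [mul_comm]
  congr 1
  exact prod_congr rfl fun j _ => by ring_nf

/-- The `m`-th term of Euler's expansion
`(a x^(2n+1); x²)_∞ = ∑ₘ (-a)^m x^(m² + 2nm) / (x²; x²)_m`. -/
def eulerTerm (x a : S) (n m : ℕ) : S :=
  (-a) ^ m * x ^ (m * m + 2 * n * m) * Ring.inverse (qPoch x 1 2 m)

def eulerSum (x a : S) (N n : ℕ) : S := ∑ m ∈ range (N + 1), eulerTerm x a n m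

lemma eulerTerm_zero (x a : S) (n : ℕ) : eulerTerm x a n 0 = 1 := by
  simp [eulerTerm, qPoch]

lemma eulerTerm_eq_zero (hx : x ^ (N + 1) = 0) (a : S) (n : ℕ) {m : ℕ} (hm : N + 1 ≤ m) :
    eulerTerm x a n m = 0 := by
  rw [eulerTerm, pow_eq_zero_of_le (by nlinarith) hx, mul_zero, zero_mul]

lemma eulerTerm_succ_sub_eulerTerm_succ (hx : IsNilpotent x) (a : S) (n m : ℕ) :
    eulerTerm x a n (m + 1) - eulerTerm x a (n + 1) (m + 1) =
      -(a * x ^ (2 * n + 1)) * eulerTerm x a (n + 1) m := by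
  have hinv : Ring.inverse (qPoch x 1 2 m) =
      (1 - x ^ (2 * m + 2)) * Ring.inverse (qPoch x 1 2 (m + 1)) := by
    rw [qPoch_succ, one_mul, add_comm 2, mul_inverse_mul_cancel_right]
    exact (hx.pow_of_pos (by omega)).isUnit_one_sub
  rw [eulerTerm, eulerTerm, eulerTerm, hinv]
  ring

lemma eulerSum_eq_mul_eulerSum_succ (hx : x ^ (N + 1) = 0) (a : S) (n : ℕ) :
    eulerSum x a N n = (1 - a * x ^ (2 * n + 1)) * eulerSum x a N (n + 1) := by
  have hshift : ∀ k, ∑ m ∈ range (N + 1), eulerTerm x a k (m + 1) = eulerSum x a N k - 1 := by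
    intro k
    have h := sum_range_succ' (eulerTerm x a k) (N + 1)
    rw [sum_range_succ, eulerTerm_eq_zero hx a k le_rfl, eulerTerm_zero, add_zero] at h
    rw [eulerSum, h, add_sub_cancel_right]
  have hdiff := sum_congr rfl fun m (_ : m ∈ range (N + 1)) =>
    eulerTerm_succ_sub_eulerTerm_succ ⟨N + 1, hx⟩ a n m
  rw [sum_sub_distrib, hshift, hshift, ← mul_sum, ← eulerSum] at hdiff
  linear_combination hdiff

lemma eulerSum_eq_one (hx : x ^ (N + 1) = 0) (a : S) {n : ℕ} (hn : N ≤ 2 * n) :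
    eulerSum x a N n = 1 := by
  rw [eulerSum, sum_range_succ', eulerTerm_zero, add_eq_right]
  refine sum_eq_zero fun m _ => ?_
  rw [eulerTerm, pow_eq_zero_of_le (by nlinarith) hx, mul_zero, zero_mul]

lemma qPoch_eq_eulerSum (hx : x ^ (N + 1) = 0) (a : S) (n : ℕ) :
    qPoch x a (2 * n + 1) (N + 1) = eulerSum x a N n := by
  suffices ∀ d n, N ≤ 2 * n + d → qPoch x a (2 * n + 1) (N + 1) = eulerSum x a N n from
    this N n (by omega)
  intro d
  induction d with
  | zero => intro n hn; rw [qPoch_eq_one hx a (by omega), eulerSum_eq_one hx a (by omega)]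
  | succ d ih =>
    intro n hn
    rw [qPoch_eq_mul_qPoch_add_two hx, eulerSum_eq_mul_eulerSum_succ hx, ← ih (n + 1) (by omega)]
    ring_nf

lemma sum_pow_mul_qPoch (hx : x ^ (N + 1) = 0) (m : ℕ) :
    ∑ n ∈ range (N + 1), x ^ (2 * n * (m + 1)) * qPoch x 1 (2 * n + 2) (N + 1) =
      qPoch x 1 2 m := by
  set P : ℕ → S := fun n => qPoch x 1 (2 * n) (N + 1)
  have hP1 : ∀ n, qPoch x 1 (2 * n + 2) (N + 1) = P (n + 1) := fun n => rfl
  have hstep : ∀ n, x ^ (2 * n) * P (n + 1) = P (n + 1) - P n := fun n => by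
    rw [← hP1, show P n = _ from qPoch_eq_mul_qPoch_add_two hx 1 (2 * n), one_mul]
    ring
  have hP0 : P 0 = 0 := prod_eq_zero (mem_range.mpr N.succ_pos) (by simp)
  simp only [hP1]
  induction m with
  | zero =>
    simp only [zero_add, mul_one, hstep]
    rw [sum_range_sub, hP0, sub_zero]
    exact qPoch_eq_one hx 1 (by omega)
  | succ m ih =>
    have hshift : ∑ n ∈ range (N + 1), x ^ (2 * n * (m + 1)) * P n =
        x ^ (2 * m + 2) * ∑ n ∈ range (N + 1), x ^ (2 * n * (m + 1)) * P (n + 1) := by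
      have h := sum_range_succ' (fun n => x ^ (2 * n * (m + 1)) * P n) (N + 1)
      rw [sum_range_succ, pow_eq_zero_of_le (by nlinarith) hx, zero_mul, add_zero, hP0,
        mul_zero, add_zero] at h
      rw [h, mul_sum]
      exact sum_congr rfl fun n _ => by ring
    calc ∑ n ∈ range (N + 1), x ^ (2 * n * (m + 1 + 1)) * P (n + 1)
        = ∑ n ∈ range (N + 1), x ^ (2 * n * (m + 1)) * (P (n + 1) - P n) :=
          sum_congr rfl fun n _ => by rw [← hstep]; ring
      _ = (1 - x ^ (2 * m + 2)) * qPoch x 1 2 m := by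
          simp only [mul_sub, sum_sub_distrib, hshift, ih]
          ring
      _ = qPoch x 1 2 (m + 1) := by rw [qPoch_succ, one_mul]; ring_nf

lemma sum_pow_mul_qPoch_mul_qPoch (hx : x ^ (N + 1) = 0) (a : S) :
    ∑ n ∈ range (N + 1), x ^ (2 * n) * (∏ j ∈ range (N + 1), (1 - x ^ (2 * n + 2 + 2 * j))) *
        (∏ j ∈ range (N + 1), (1 - a * x ^ (2 * n + 1 + 2 * j))) = partialTheta x a N := by
  calc _ = ∑ n ∈ range (N + 1), x ^ (2 * n) * qPoch x 1 (2 * n + 2) (N + 1) * eulerSum x a N n :=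
        sum_congr rfl fun n _ => by rw [← qPoch_eq_eulerSum hx]; simp only [qPoch, one_mul]
    _ = ∑ m ∈ range (N + 1), (-a) ^ m * x ^ (m * m) * Ring.inverse (qPoch x 1 2 m) *
          ∑ n ∈ range (N + 1), x ^ (2 * n * (m + 1)) * qPoch x 1 (2 * n + 2) (N + 1) := by
        simp only [eulerSum, mul_sum]
        rw [sum_comm]
        exact sum_congr rfl fun m _ => sum_congr rfl fun n _ => by rw [eulerTerm]; ring
    _ = partialTheta x a N := by
        refine sum_congr rfl fun m _ => ?_
        rw [sum_pow_mul_qPoch hx, mul_assoc,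
          Ring.inverse_mul_cancel _ (isUnit_qPoch ⟨N + 1, hx⟩ 1 two_pos m), mul_one]

end Nilpotent

section PowerSeries

variable {R : Type*} [CommRing R]

lemma triangle_succ (k : ℕ) : (k + 1) * (k + 2) / 2 = k * (k + 1) / 2 + (k + 1) := by
  rw [show (k + 1) * (k + 2) = k * (k + 1) + (k + 1) * 2 by ring,
    Nat.add_mul_div_right _ _ two_pos]

lemma isUnit_one_sub_mul_X_pow (a : R⟦X⟧) {k : ℕ} (hk : k ≠ 0) : IsUnit (1 - a * X ^ k) := by
  simp [isUnit_iff_constantCoeff, hk]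

def negQPoch (k : ℕ) : R⟦X⟧ := ∏ j ∈ range k, (1 + X ^ (j + 1))

def lhsDenom (a : R⟦X⟧) (k : ℕ) : R⟦X⟧ := ∏ j ∈ range k, (1 - a * X ^ (2 * j + 2))

def lhsTerm (a : R⟦X⟧) (k : ℕ) : R⟦X⟧ :=
  negQPoch (k - 1) * (-a) ^ k * X ^ (k * (k + 1) / 2) * Ring.inverse (lhsDenom a k)

def lhsSum (a : R⟦X⟧) (M : ℕ) : R⟦X⟧ := 1 + ∑ k ∈ Icc 1 M, lhsTerm a k

def lhsSumError (a : R⟦X⟧) (M : ℕ) : R⟦X⟧ :=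
  (-a) ^ (M + 2) * X ^ ((M + 2) * (M + 3) / 2) * negQPoch M * Ring.inverse (lhsDenom a (M + 1))

lemma lhsDenom_succ (a : R⟦X⟧) (k : ℕ) :
    lhsDenom a (k + 1) = lhsDenom a k * (1 - a * X ^ (2 * k + 2)) :=
  prod_range_succ _ _

lemma lhsDenom_succ' (a : R⟦X⟧) (k : ℕ) :
    lhsDenom a (k + 1) = lhsDenom (a * X ^ 2) k * (1 - a * X ^ 2) := by
  rw [lhsDenom, prod_range_succ', lhsDenom]
  exact congrArg₂ _ (prod_congr rfl fun j _ => by ring) (by ring)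

lemma lhsTerm_add_mul_lhsTerm (a : R⟦X⟧) (M : ℕ) :
    lhsTerm a (M + 2) + a * X * lhsTerm (a * X ^ 2) (M + 1) =
      lhsSumError a M - lhsSumError a (M + 1) := by
  have hI : Ring.inverse (lhsDenom a (M + 1)) =
      (1 - a * X ^ (2 * (M + 1) + 2)) * Ring.inverse (lhsDenom a (M + 2)) := by
    rw [lhsDenom_succ a (M + 1),
      mul_inverse_mul_cancel_right (isUnit_one_sub_mul_X_pow a (by omega))]
  have hI' : Ring.inverse (lhsDenom (a * X ^ 2) (M + 1)) =
      (1 - a * X ^ 2) * Ring.inverse (lhsDenom a (M + 2)) := by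
    rw [lhsDenom_succ' a (M + 1),
      mul_inverse_mul_cancel_right (isUnit_one_sub_mul_X_pow a (by omega))]
  have hq : negQPoch (M + 1) = negQPoch M * (1 + X ^ (M + 1) : R⟦X⟧) := prod_range_succ _ _
  have e1 : (M + 2) * (M + 2 + 1) / 2 = (M + 1) * (M + 1 + 1) / 2 + (M + 2) :=
    triangle_succ (M + 1)
  have e3 : (M + 1 + 2) * (M + 1 + 3) / 2 = (M + 1) * (M + 1 + 1) / 2 + (M + 2) + (M + 3) := by
    rw [← e1]; exact triangle_succ (M + 2)
  simp only [lhsTerm, lhsSumError, show M + 2 - 1 = M + 1 from rfl,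
    show M + 1 + 1 = M + 2 from rfl, Nat.add_sub_cancel, hI, hI', hq, e1, e3]
  ring

lemma lhsSum_succ_eq_add (a : R⟦X⟧) (M : ℕ) :
    lhsSum a (M + 1) = lhsSum a M + lhsTerm a (M + 1) := by
  rw [lhsSum, lhsSum, sum_Icc_succ_top (by omega), add_assoc]

lemma lhsSum_succ (a : R⟦X⟧) (M : ℕ) :
    lhsSum a (M + 1) = 1 - a * X * lhsSum (a * X ^ 2) M - lhsSumError a M := by
  induction M with
  | zero =>
    have hI := Ring.mul_inverse_cancel _ (isUnit_one_sub_mul_X_pow a two_ne_zero)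
    norm_num only [lhsSum, lhsTerm, lhsSumError, lhsDenom, negQPoch, Icc_self, sum_singleton,
      Icc_eq_empty_of_lt, sum_empty, prod_range_one, range_zero, prod_empty]
    linear_combination (-(a * X)) * hI
  | succ M ih =>
    rw [lhsSum_succ_eq_add, ih, lhsSum_succ_eq_add (a * X ^ 2)]
    linear_combination lhsTerm_add_mul_lhsTerm a M

lemma X_pow_dvd_lhsSumError (a : R⟦X⟧) (M : ℕ) : X ^ (M + 2) ∣ lhsSumError a M := by
  have h : M + 2 ≤ (M + 2) * (M + 3) / 2 := by
    rw [show (M + 2) * (M + 3) / 2 = _ from triangle_succ (M + 1)]; omega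
  exact ((pow_dvd_pow X h).mul_left _).mul_right _ |>.mul_right _

lemma X_pow_dvd_lhsSum_sub_partialTheta (a : R⟦X⟧) (M : ℕ) :
    X ^ (M + 1) ∣ lhsSum a M - partialTheta X a M := by
  induction M generalizing a with
  | zero => simp [lhsSum, partialTheta]
  | succ M ih =>
    have hsucc : lhsSum a (M + 1) - partialTheta X a (M + 1) =
        -(a * X * (lhsSum (a * X ^ 2) M - partialTheta X (a * X ^ 2) M)) - lhsSumError a M := by
      rw [lhsSum_succ, partialTheta_succ]
      ring
    rw [hsucc]
    refine dvd_sub (dvd_neg.mpr ?_) (X_pow_dvd_lhsSumError a M)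
    rw [pow_succ']
    exact mul_dvd_mul (dvd_mul_left X a) (ih _)

lemma X_pow_dvd_sum_sub_partialTheta (a : R⟦X⟧) (N : ℕ) :
    X ^ (N + 1) ∣ ∑ n ∈ range (N + 1), X ^ (2 * n) *
        (∏ j ∈ range (N + 1), (1 - X ^ (2 * n + 2 + 2 * j))) *
        (∏ j ∈ range (N + 1), (1 - a * X ^ (2 * n + 1 + 2 * j))) - partialTheta X a N := by
  rw [← Ideal.mem_span_singleton, ← Ideal.Quotient.eq]
  have hx : Ideal.Quotient.mk (Ideal.span {(X : R⟦X⟧) ^ (N + 1)}) X ^ (N + 1) = 0 := by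
    rw [← map_pow, Ideal.Quotient.eq_zero_iff_mem]
    exact Ideal.mem_span_singleton_self _
  simp only [partialTheta, map_sum, map_mul, map_prod, map_sub, map_one, map_pow, map_neg]
  exact sum_pow_mul_qPoch_mul_qPoch hx _

lemma coeff_eq_of_X_pow_dvd_sub {f g : R⟦X⟧} {N : ℕ} (h : X ^ (N + 1) ∣ f - g) :
    coeff N f = coeff N g := by
  simpa [sub_eq_zero] using X_pow_dvd_iff.mp h N N.lt_succ_self

end PowerSeries

end PartialTheta

end

/-- The two expansions of the partial theta function `∑_{k≥0} (-a)^k q^{k²}` agree: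
`∑_{k≥0} (-a)^k q^{k(k+1)/2} (-q;q)_{k-1} / (aq²;q²)_k
  = ∑_{n≥0} q^{2n} (q^{2n+2};q²)_∞ (aq^{2n+1};q²)_∞`
as formal power series in `q` over `ℤ[a]`.  Summands with index `> N` and factors of
the infinite products with index `j > N` have no effect on the `N`-th coefficient, so
that coefficient is computed from the displayed finite truncations. -/
theorem partial_theta_expansions_agree (N : ℕ) :
    PowerSeries.coeff (R := Polynomial ℤ) N
      (1 + ∑ k ∈ Finset.Icc 1 N,
        (∏ j ∈ Finset.range (k - 1), (1 + PowerSeries.X ^ (j + 1))) *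
          (-(PowerSeries.C (R := Polynomial ℤ) Polynomial.X)) ^ k *
          PowerSeries.X ^ (k * (k + 1) / 2) *
          Ring.inverse (∏ j ∈ Finset.range k,
            (1 - PowerSeries.C (R := Polynomial ℤ) Polynomial.X * PowerSeries.X ^ (2 * j + 2)))) =
    PowerSeries.coeff (R := Polynomial ℤ) N
      (∑ n ∈ Finset.range (N + 1),
        PowerSeries.X ^ (2 * n) *
          (∏ j ∈ Finset.range (N + 1), (1 - PowerSeries.X ^ (2 * n + 2 + 2 * j))) *
          (∏ j ∈ Finset.range (N + 1),
            (1 - PowerSeries.C (R := Polynomial ℤ) Polynomial.X *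
              PowerSeries.X ^ (2 * n + 1 + 2 * j)))) := by
  apply PartialTheta.coeff_eq_of_X_pow_dvd_sub
  have h := dvd_sub
    (PartialTheta.X_pow_dvd_lhsSum_sub_partialTheta (C (Polynomial.X : Polynomial ℤ)) N)
    (PartialTheta.X_pow_dvd_sum_sub_partialTheta (C (Polynomial.X : Polynomial ℤ)) N)
  rwa [sub_sub_sub_cancel_right] at h
end
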